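/- arXiv:1702.08534 — 11 statements merged into one kernel-verified Lean document; each statement's English description precedes it below -/
import Mathlib

section
/- Let M ≥ 2 be an integer and let ω ∈ ℝ, ω ≠ 0. Let H₀, H_m : ℝ → ℂ and θ̃₀, θ_m : ℝ → ℝ be functions. Assume that the infinite product ψ̂₀(ω/M) := lim_{n→∞} ∏_{i=1}^{n} M^{-1/2} H₀(ω/M^{i+1}) converges and that the series β'(ω) := ∑_{i=2}^{∞} θ̃₀(ω/M^{i}) converges. Define G₀(ν) := e^{-iθ̃₀(ν)} H₀(ν) and G_m(ν) := e^{-iθ_m(ν)} H_m(ν); then the product ψ̂₀^H(ω/M) := lim_{n→∞} ∏_{i=1}^{n} M^{-1/2} G₀(ω/M^{i+1}) also converges, and one sets ψ̂_m(ω) := M^{-1/2} H_m(ω/M) ψ̂₀(ω/M) and ψ̂_m^H(ω) := M^{-1/2} G_m(ω/M) ψ̂₀^H(ω/M). If θ_m(ω/M) + β'(ω) ≡ (π/2)·sign(ω) (mod 2π), then ψ̂_m^H(ω) = -i·sign(ω)·ψ̂_m(ω). -/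
open Filter

/-- Sufficiency direction of Proposition 1 (M-band Hilbert pairs), stated pointwise
at a single frequency `ω ≠ 0`. -/
theorem stmt_0 (M : ℕ) (hM : 2 ≤ M) (ω : ℝ) (hω : ω ≠ 0)
    (H₀ Hm : ℝ → ℂ) (θ₀ θm : ℝ → ℝ) (ψ₀ : ℂ) (β' : ℝ)
    (hψ₀ : Tendsto (fun n : ℕ => ∏ i ∈ Finset.range n,
        ((Real.sqrt M : ℝ) : ℂ)⁻¹ * H₀ (ω / (M : ℝ) ^ (i + 2)))
      atTop (nhds ψ₀))
    (hβ' : HasSum (fun i : ℕ => θ₀ (ω / (M : ℝ) ^ (i + 2))) β')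
    (hphase : ∃ n : ℤ, θm (ω / M) + β' = Real.pi / 2 * Real.sign ω + 2 * Real.pi * n) :
    ∃ ψ₀H : ℂ,
      Tendsto (fun n : ℕ => ∏ i ∈ Finset.range n,
          ((Real.sqrt M : ℝ) : ℂ)⁻¹ *
            (Complex.exp (-(θ₀ (ω / (M : ℝ) ^ (i + 2)) : ℂ) * Complex.I) *
              H₀ (ω / (M : ℝ) ^ (i + 2))))
        atTop (nhds ψ₀H) ∧
      ((Real.sqrt M : ℝ) : ℂ)⁻¹ *
          (Complex.exp (-(θm (ω / M) : ℂ) * Complex.I) * Hm (ω / M)) * ψ₀H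
        = -Complex.I * (Real.sign ω : ℂ) *
            (((Real.sqrt M : ℝ) : ℂ)⁻¹ * Hm (ω / M) * ψ₀) := by
  refine ⟨Complex.exp (-(β' : ℂ) * Complex.I) * ψ₀, ?_, ?_⟩
  · have hS : Tendsto (fun n : ℕ => ∑ i ∈ Finset.range n,
        θ₀ (ω / (M : ℝ) ^ (i + 2))) atTop (nhds β') :=
      hβ'.tendsto_sum_nat
    have hE : Tendsto (fun n : ℕ =>
        Complex.exp (-((∑ i ∈ Finset.range n, θ₀ (ω / (M : ℝ) ^ (i + 2)) : ℝ) : ℂ)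
          * Complex.I)) atTop (nhds (Complex.exp (-(β' : ℂ) * Complex.I))) := by
      refine (Complex.continuous_exp.tendsto _).comp ?_
      have : Tendsto (fun n : ℕ => ((∑ i ∈ Finset.range n,
          θ₀ (ω / (M : ℝ) ^ (i + 2)) : ℝ) : ℂ)) atTop (nhds (β' : ℂ)) :=
        (Complex.continuous_ofReal.tendsto _).comp hS
      exact (this.neg.mul tendsto_const_nhds)
    have key : ∀ n : ℕ, (∏ i ∈ Finset.range n,
        ((Real.sqrt M : ℝ) : ℂ)⁻¹ *
          (Complex.exp (-(θ₀ (ω / (M : ℝ) ^ (i + 2)) : ℂ) * Complex.I) *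
            H₀ (ω / (M : ℝ) ^ (i + 2))))
      = Complex.exp (-((∑ i ∈ Finset.range n, θ₀ (ω / (M : ℝ) ^ (i + 2)) : ℝ) : ℂ)
          * Complex.I)
        * ∏ i ∈ Finset.range n,
            ((Real.sqrt M : ℝ) : ℂ)⁻¹ * H₀ (ω / (M : ℝ) ^ (i + 2)) := by
      intro n
      calc (∏ i ∈ Finset.range n,
            ((Real.sqrt M : ℝ) : ℂ)⁻¹ *
              (Complex.exp (-(θ₀ (ω / (M : ℝ) ^ (i + 2)) : ℂ) * Complex.I) *
                H₀ (ω / (M : ℝ) ^ (i + 2))))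
          = ∏ i ∈ Finset.range n,
              (Complex.exp (-(θ₀ (ω / (M : ℝ) ^ (i + 2)) : ℂ) * Complex.I) *
                (((Real.sqrt M : ℝ) : ℂ)⁻¹ * H₀ (ω / (M : ℝ) ^ (i + 2)))) :=
            Finset.prod_congr rfl (fun i _ => by ring)
        _ = (∏ i ∈ Finset.range n,
              Complex.exp (-(θ₀ (ω / (M : ℝ) ^ (i + 2)) : ℂ) * Complex.I)) *
            ∏ i ∈ Finset.range n,
              ((Real.sqrt M : ℝ) : ℂ)⁻¹ * H₀ (ω / (M : ℝ) ^ (i + 2)) :=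
            Finset.prod_mul_distrib
        _ = _ := by
            congr 1
            rw [← Complex.exp_sum]
            congr 1
            push_cast
            simp [neg_mul, Finset.sum_mul]
    exact Tendsto.congr (fun n => (key n).symm) (hE.mul hψ₀)
  · obtain ⟨n, hn⟩ := hphase
    have hexp : Complex.exp (-(θm (ω / M) : ℂ) * Complex.I) *
        Complex.exp (-(β' : ℂ) * Complex.I)
        = -Complex.I * (Real.sign ω : ℂ) := by
      rw [← Complex.exp_add]
      have : (-(θm (ω / M) : ℂ) * Complex.I + -(β' : ℂ) * Complex.I)
          = -(((θm (ω / M) + β' : ℝ) : ℂ)) * Complex.I := by push_cast; ring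
      rw [this, hn]
      have hhalf : Complex.exp ((Real.pi / 2 : ℝ) * Complex.I) = Complex.I := by
        rw [Complex.exp_mul_I]
        simp [← Complex.ofReal_cos, ← Complex.ofReal_sin, Real.cos_pi_div_two,
          Real.sin_pi_div_two]
      rcases lt_or_gt_of_ne hω with h | h
      · rw [Real.sign_of_neg h]
        have h2 : (-((Real.pi / 2 * Real.sign ω + 2 * Real.pi * (n : ℤ) : ℝ) : ℂ)) * Complex.I
            = ((Real.pi / 2 : ℝ) : ℂ) * Complex.I + (-n : ℤ) * (2 * Real.pi * Complex.I) := by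
          rw [Real.sign_of_neg h]; push_cast; ring
        rw [Real.sign_of_neg h] at h2
        rw [h2, Complex.exp_add, Complex.exp_int_mul_two_pi_mul_I, hhalf]
        norm_num
      · rw [Real.sign_of_pos h]
        have h2 : (-((Real.pi / 2 * Real.sign ω + 2 * Real.pi * (n : ℤ) : ℝ) : ℂ)) * Complex.I
            = -(((Real.pi / 2 : ℝ) : ℂ) * Complex.I) + (-n : ℤ) * (2 * Real.pi * Complex.I) := by
          rw [Real.sign_of_pos h]; push_cast; ring
        rw [Real.sign_of_pos h] at h2
        rw [h2, Complex.exp_add, Complex.exp_int_mul_two_pi_mul_I, Complex.exp_neg, hhalf,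
          Complex.inv_I]
        norm_num
    calc ((Real.sqrt M : ℝ) : ℂ)⁻¹ *
          (Complex.exp (-(θm (ω / M) : ℂ) * Complex.I) * Hm (ω / M)) *
          (Complex.exp (-(β' : ℂ) * Complex.I) * ψ₀)
        = (Complex.exp (-(θm (ω / M) : ℂ) * Complex.I) *
            Complex.exp (-(β' : ℂ) * Complex.I)) *
          (((Real.sqrt M : ℝ) : ℂ)⁻¹ * Hm (ω / M) * ψ₀) := by ring
      _ = _ := by rw [hexp]
end

section
/- Let M ≥ 2 be an integer and let ω ∈ ℝ, ω ≠ 0. Let H₀, H_m : ℝ → ℂ and θ̃₀, θ_m : ℝ → ℝ be functions. Assume that the infinite product ψ̂₀(ω/M) := lim_{n→∞} ∏_{i=1}^{n} M^{-1/2} H₀(ω/M^{i+1}) converges and that the series β'(ω) := ∑_{i=2}^{∞} θ̃₀(ω/M^{i}) converges. Define G₀(ν) := e^{-iθ̃₀(ν)} H₀(ν), G_m(ν) := e^{-iθ_m(ν)} H_m(ν), ψ̂₀^H(ω/M) := lim_{n→∞} ∏_{i=1}^{n} M^{-1/2} G₀(ω/M^{i+1}), ψ̂_m(ω) := M^{-1/2}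 H_m(ω/M) ψ̂₀(ω/M), and ψ̂_m^H(ω) := M^{-1/2} G_m(ω/M) ψ̂₀^H(ω/M). If ψ̂_m(ω) ≠ 0 and ψ̂_m^H(ω) = -i·sign(ω)·ψ̂_m(ω), then θ_m(ω/M) + β'(ω) ≡ (π/2)·sign(ω) (mod 2π). -/
open Filter

/-- Necessity direction of Proposition 1 (M-band Hilbert pairs), stated pointwise
at a single frequency `ω ≠ 0` where the primal wavelet's Fourier transform does
not vanish. -/
theorem stmt_1 (M : ℕ) (hM : 2 ≤ M) (ω : ℝ) (hω : ω ≠ 0)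
    (H₀ Hm : ℝ → ℂ) (θ₀ θm : ℝ → ℝ) (ψ₀ ψ₀H : ℂ) (β' : ℝ)
    (hψ₀ : Tendsto (fun n : ℕ => ∏ i ∈ Finset.range n,
        ((Real.sqrt M : ℝ) : ℂ)⁻¹ * H₀ (ω / (M : ℝ) ^ (i + 2)))
      atTop (nhds ψ₀))
    (hβ' : HasSum (fun i : ℕ => θ₀ (ω / (M : ℝ) ^ (i + 2))) β')
    (hψ₀H : Tendsto (fun n : ℕ => ∏ i ∈ Finset.range n,
        ((Real.sqrt M : ℝ) : ℂ)⁻¹ *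
          (Complex.exp (-(θ₀ (ω / (M : ℝ) ^ (i + 2)) : ℂ) * Complex.I) *
            H₀ (ω / (M : ℝ) ^ (i + 2))))
      atTop (nhds ψ₀H))
    (hne : ((Real.sqrt M : ℝ) : ℂ)⁻¹ * Hm (ω / M) * ψ₀ ≠ 0)
    (heq : ((Real.sqrt M : ℝ) : ℂ)⁻¹ *
          (Complex.exp (-(θm (ω / M) : ℂ) * Complex.I) * Hm (ω / M)) * ψ₀H
        = -Complex.I * (Real.sign ω : ℂ) *
            (((Real.sqrt M : ℝ) : ℂ)⁻¹ * Hm (ω / M) * ψ₀)) :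
    ∃ n : ℤ, θm (ω / M) + β' = Real.pi / 2 * Real.sign ω + 2 * Real.pi * n := by
  set c : ℂ := ((Real.sqrt M : ℝ) : ℂ)⁻¹ with hc
  -- Step 1: ψ₀H = exp(-β' i) ψ₀
  have hψeq : ψ₀H = Complex.exp (-(β' : ℂ) * Complex.I) * ψ₀ := by
    have h3 : Tendsto (fun x : ℝ => Complex.exp (-(x : ℂ) * Complex.I)) (nhds β')
        (nhds (Complex.exp (-(β' : ℂ) * Complex.I))) := by
      apply Continuous.tendsto
      continuity
    have h1 : Tendsto (fun n : ℕ =>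
        Complex.exp (-((∑ i ∈ Finset.range n, θ₀ (ω / (M : ℝ) ^ (i + 2)) : ℝ) : ℂ)
          * Complex.I) * ∏ i ∈ Finset.range n, c * H₀ (ω / (M : ℝ) ^ (i + 2)))
        atTop (nhds (Complex.exp (-(β' : ℂ) * Complex.I) * ψ₀)) :=
      (h3.comp hβ'.tendsto_sum_nat).mul hψ₀
    have h4 : ∀ n : ℕ,
        Complex.exp (-((∑ i ∈ Finset.range n, θ₀ (ω / (M : ℝ) ^ (i + 2)) : ℝ) : ℂ)
          * Complex.I) * ∏ i ∈ Finset.range n, c * H₀ (ω / (M : ℝ) ^ (i + 2))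
        = ∏ i ∈ Finset.range n,
            c * (Complex.exp (-(θ₀ (ω / (M : ℝ) ^ (i + 2)) : ℂ) * Complex.I) *
              H₀ (ω / (M : ℝ) ^ (i + 2))) := by
      intro n
      have hsplit : ∏ i ∈ Finset.range n,
            c * (Complex.exp (-(θ₀ (ω / (M : ℝ) ^ (i + 2)) : ℂ) * Complex.I) *
              H₀ (ω / (M : ℝ) ^ (i + 2)))
          = (∏ i ∈ Finset.range n,
              Complex.exp (-(θ₀ (ω / (M : ℝ) ^ (i + 2)) : ℂ) * Complex.I)) *
            ∏ i ∈ Finset.range n, c * H₀ (ω / (M : ℝ) ^ (i + 2)) := by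
        rw [← Finset.prod_mul_distrib]
        exact Finset.prod_congr rfl (fun i _ => by ring)
      rw [hsplit, ← Complex.exp_sum]
      congr 2
      push_cast
      rw [neg_mul, Finset.sum_mul, ← Finset.sum_neg_distrib]
      exact Finset.sum_congr rfl (fun i _ => by ring)
    have h5 : Tendsto (fun n : ℕ => ∏ i ∈ Finset.range n,
        c * (Complex.exp (-(θ₀ (ω / (M : ℝ) ^ (i + 2)) : ℂ) * Complex.I) *
          H₀ (ω / (M : ℝ) ^ (i + 2)))) atTop
        (nhds (Complex.exp (-(β' : ℂ) * Complex.I) * ψ₀)) := by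
      simpa only [h4] using h1
    exact tendsto_nhds_unique hψ₀H h5
  -- Step 2: cancel
  have key : Complex.exp (-((θm (ω / M) + β' : ℝ) : ℂ) * Complex.I)
      = -Complex.I * (Real.sign ω : ℂ) := by
    have h2 : Complex.exp (-((θm (ω / M) + β' : ℝ) : ℂ) * Complex.I) *
        (c * Hm (ω / M) * ψ₀) = -Complex.I * (Real.sign ω : ℂ) *
        (c * Hm (ω / M) * ψ₀) := by
      rw [← heq, hψeq]
      push_cast
      rw [neg_add, add_mul, Complex.exp_add]
      ring
    exact mul_right_cancel₀ hne h2
  -- Step 3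
  have hval : -Complex.I * (Real.sign ω : ℂ)
      = Complex.exp (-((Real.pi / 2 * Real.sign ω : ℝ) : ℂ) * Complex.I) := by
    rcases lt_or_gt_of_ne hω with h | h
    · rw [Real.sign_of_neg h]
      rw [show (-((Real.pi / 2 * (-1 : ℝ) : ℝ) : ℂ)) * Complex.I
          = ((Real.pi / 2 : ℝ) : ℂ) * Complex.I from by push_cast; ring]
      rw [Complex.exp_mul_I, ← Complex.ofReal_cos, ← Complex.ofReal_sin,
        Real.cos_pi_div_two, Real.sin_pi_div_two]
      push_cast
      ring
    · rw [Real.sign_of_pos h]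
      rw [show (-((Real.pi / 2 * (1 : ℝ) : ℝ) : ℂ)) * Complex.I
          = ((-(Real.pi / 2) : ℝ) : ℂ) * Complex.I from by push_cast; ring]
      rw [Complex.exp_mul_I, ← Complex.ofReal_cos, ← Complex.ofReal_sin,
        Real.cos_neg, Real.sin_neg, Real.cos_pi_div_two, Real.sin_pi_div_two]
      push_cast
      ring
  rw [hval, Complex.exp_eq_exp_iff_exists_int] at key
  obtain ⟨n, hn⟩ := key
  refine ⟨-n, ?_⟩
  have hI : (Complex.I : ℂ) ≠ 0 := Complex.I_ne_zero
  have : (-((θm (ω / M) + β' : ℝ) : ℂ)) = -((Real.pi / 2 * Real.sign ω : ℝ) : ℂ) + n * (2 * Real.pi) := by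
    have h6 : (-((θm (ω / M) + β' : ℝ) : ℂ)) * Complex.I
        = (-((Real.pi / 2 * Real.sign ω : ℝ) : ℂ) + n * (2 * Real.pi)) * Complex.I := by
      rw [hn]; ring
    exact mul_right_cancel₀ hI h6
  have h7 : -(θm (ω / M) + β') = -(Real.pi / 2 * Real.sign ω) + n * (2 * Real.pi) := by
    exact_mod_cast this
  push_cast
  linarith
end

section
/- Let M ≥ 2 be an integer, γ ∈ ℝ, and α̃ : ℝ → ℝ. Suppose that for every ω ∈ (-2π/M, 2π/M) with ω ≠ 0 one has α̃(ω) ≡ (π/2)·sign(ω) − γMω/(M−1) (mod 2π), and that for every ω ∈ (-2π/M, 0) one has α̃(ω + 2π/M) ≡ α̃(ω) (mod 2π). Then there exists d ∈ ℤ such that γ = (d + 1/2)(M − 1). -/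
open Real

/-- Comparing the two sides of the jump of `sign` at `ω = ± a / 2`, which the `a`-periodicity
identifies, forces the phase jump `π - s a` to be a multiple of `2π`. -/
theorem exists_int_slope_mul_eq_of_sign_phase {a s : ℝ} (ha : 0 < a) {α : ℝ → ℝ}
    (h_phase : ∀ ω : ℝ, -a < ω → ω < a → ω ≠ 0 →
      ∃ n : ℤ, α ω = π / 2 * Real.sign ω - s * ω + 2 * π * n)
    (h_periodic : ∀ ω : ℝ, -a < ω → ω < 0 → ∃ n : ℤ, α (ω + a) = α ω + 2 * π * n) :
    ∃ d : ℤ, s * a = (2 * d + 1) * π := by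
  obtain ⟨nPos, hPos⟩ := h_phase (a / 2) (by linarith) (by linarith) (by positivity)
  obtain ⟨nNeg, hNeg⟩ := h_phase (-(a / 2)) (by linarith) (by linarith) (by linarith)
  obtain ⟨n, h⟩ := h_periodic (-(a / 2)) (by linarith) (by linarith)
  rw [show -(a / 2) + a = a / 2 by ring] at h
  rw [Real.sign_of_pos (by positivity)] at hPos
  rw [Real.sign_of_neg (by linarith)] at hNeg
  refine ⟨nPos - nNeg - n, ?_⟩
  push_cast
  linear_combination hPos - hNeg - h

/-- Quantization of the phase slope γ (from the proof of Proposition 2). -/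
theorem stmt_2 (M : ℕ) (hM : 2 ≤ M) (γ : ℝ) (α : ℝ → ℝ)
    (h1 : ∀ ω : ℝ, -(2 * π / M) < ω → ω < 2 * π / M → ω ≠ 0 →
      ∃ n : ℤ, α ω = π / 2 * Real.sign ω - γ * M * ω / ((M : ℝ) - 1) + 2 * π * n)
    (h2 : ∀ ω : ℝ, -(2 * π / M) < ω → ω < 0 →
      ∃ n : ℤ, α (ω + 2 * π / M) = α ω + 2 * π * n) :
    ∃ d : ℤ, γ = ((d : ℝ) + 1 / 2) * ((M : ℝ) - 1) := by
  have hM : (2 : ℝ) ≤ M := by exact_mod_cast hM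
  have hM₁ : (M : ℝ) - 1 ≠ 0 := by linarith
  obtain ⟨d, hd⟩ := exists_int_slope_mul_eq_of_sign_phase (a := 2 * π / M)
    (s := γ * M / ((M : ℝ) - 1)) (by positivity)
    (fun ω h₁ h₂ h₃ => by simpa only [mul_div_right_comm _ ω] using h1 ω h₁ h₂ h₃) h2
  refine ⟨d, ?_⟩
  have hM₀ : (M : ℝ) ≠ 0 := by positivity
  field_simp at hd ⊢
  nlinarith [pi_pos]
end

section
/- Let M ≥ 2 be an integer and γ ∈ ℝ. Let θ̃₀ : ℝ → ℝ be odd (θ̃₀(−ω) = −θ̃₀(ω) for all ω) and 2π-periodic, with θ̃₀(ω) = γω for all ω ∈ [0, 2π/M). Let α̃ : ℝ → ℝ satisfy: for every ω ∈ ℝ, α̃(ω + 2π/M) ≡ α̃(ω) (mod 2π). For |ω| < 2Mπ define β(ω) := ∑_{i=1}^{∞} θ̃₀(ω/M^{i}) (this series converges since θ̃₀ is linear on [0, 2π/M) and odd). Assume that for every ω with 0 < |ω| < 2Mπ one has α̃(ω/M) + β(ω) ≡ (π/2)·sign(ω) (mod 2π). Then there exists d ∈ ℤ such that: (i) γ =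 (d + 1/2)(M − 1); (ii) for every ω ∈ (0, 2π/M), α̃(ω) ≡ π/2 − (d + 1/2)Mω (mod 2π); and (iii) for every p ∈ {0, …, M−1} and every ω ∈ (2pπ/M, 2(p+1)π/M), θ̃₀(ω) ≡ (d + 1/2)(M − 1)ω − pπ (mod 2π). -/
open Real

/-!
On `(-2π, 2π)` every term of the series `β ω = ∑ θ₀ (ω / M^(i+1))` lies in the linear range of
`θ₀`, so `β ω = γ ω / (M - 1)`; and shifting the series gives `β (M ω) = θ₀ ω + β ω`. The phase
equation at `ω = ±π`, together with `α (π/M) ≡ α (-π/M)`, yields `2 γ π / (M - 1) ≡ π (mod 2π)`,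
i.e. `γ / (M - 1) = d + 1/2`. The phase equation at `M ω` then gives `α` on `(0, 2π/M)`, the
periodicity of `α` transports it to `(0, 2π)`, and `θ₀ ω = β (M ω) - β ω` gives `θ₀` there.
-/

section PhaseSeries

variable {m a γ : ℝ} {θ : ℝ → ℝ}

lemma hasSum_div_pow_succ (hm : 1 < m) (x : ℝ) :
    HasSum (fun i : ℕ => x / m ^ (i + 1)) (x / (m - 1)) := by
  have hm0 : 0 < m := by linarith
  have hterm : (fun i : ℕ => x / m ^ (i + 1)) = fun i => x / m * m⁻¹ ^ i := by
    funext i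
    rw [inv_pow, pow_succ]
    field_simp
  have hsum : x / (m - 1) = x / m * (1 - m⁻¹)⁻¹ := by
    field_simp
  rw [hterm, hsum]
  exact (hasSum_geometric_of_lt_one (inv_nonneg.2 hm0.le) (inv_lt_one_of_one_lt₀ hm)).mul_left _

lemma eq_mul_of_abs_lt_of_odd (hodd : ∀ ω, θ (-ω) = -θ ω)
    (hlin : ∀ ω, 0 ≤ ω → ω < a → θ ω = γ * ω) {x : ℝ} (hx : |x| < a) : θ x = γ * x := by
  rcases le_total 0 x with hx0 | hx0
  · exact hlin x hx0 (by rwa [abs_of_nonneg hx0] at hx)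
  · rw [← neg_neg x, hodd, hlin (-x) (neg_nonneg.2 hx0) (by rwa [abs_of_nonpos hx0] at hx)]
    ring

lemma hasSum_apply_div_pow_succ_of_odd (hm : 1 < m) (hodd : ∀ ω, θ (-ω) = -θ ω)
    (hlin : ∀ ω, 0 ≤ ω → ω < a / m → θ ω = γ * ω) {x : ℝ} (hx : |x| < a) :
    HasSum (fun i : ℕ => θ (x / m ^ (i + 1))) (γ * x / (m - 1)) := by
  have hm0 : 0 < m := by linarith
  have hterm : ∀ i : ℕ, θ (x / m ^ (i + 1)) = γ * (x / m ^ (i + 1)) := by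
    intro i
    refine eq_mul_of_abs_lt_of_odd hodd hlin ?_
    calc |x / m ^ (i + 1)| = |x| / m ^ (i + 1) := by
          rw [abs_div, abs_of_pos (pow_pos hm0 _)]
      _ ≤ |x| / m := div_le_div_of_nonneg_left (abs_nonneg x) hm0
          (le_self_pow₀ hm.le (Nat.succ_ne_zero i))
      _ < a / m := by gcongr
  simpa only [hterm, mul_div_assoc] using (hasSum_div_pow_succ hm x).mul_left γ

lemma eq_apply_add_of_hasSum_div_pow_succ (hm : m ≠ 0) {f : ℝ → ℝ} {x s t : ℝ}
    (hs : HasSum (fun i : ℕ => f (x / m ^ (i + 1))) s)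
    (ht : HasSum (fun i : ℕ => f (m * x / m ^ (i + 1))) t) : t = f x + s := by
  have hshift : (fun i : ℕ => f (m * x / m ^ (i + 1))) = fun i => f (x / m ^ i) := by
    funext i
    rw [pow_succ', mul_div_mul_left _ _ hm]
  rw [hshift, ← hasSum_nat_add_iff' 1] at ht
  simp only [Finset.range_one, Finset.sum_singleton, pow_zero, div_one] at ht
  linarith [hs.unique ht]

end PhaseSeries

lemma exists_int_apply_add_nat_mul {f : ℝ → ℝ} {c : ℝ}
    (h : ∀ x, ∃ n : ℤ, f (x + c) = f x + 2 * π * n) (k : ℕ) (x : ℝ) :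
    ∃ n : ℤ, f (x + k * c) = f x + 2 * π * n := by
  have hper : Function.Periodic (fun x => (f x : Real.Angle)) c := fun x => by
    obtain ⟨n, hn⟩ := h x
    exact Real.Angle.angle_eq_iff_two_pi_dvd_sub.2 ⟨n, by rw [hn]; ring⟩
  obtain ⟨n, hn⟩ := Real.Angle.angle_eq_iff_two_pi_dvd_sub.1 (hper.nat_mul k x)
  exact ⟨n, by rw [← hn]; ring⟩

def HilbertPhaseEq (m : ℝ) (α β : ℝ → ℝ) : Prop :=
  ∀ ω : ℝ, 0 < |ω| → |ω| < 2 * m * π →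
    ∃ n : ℤ, α (ω / m) + β ω = π / 2 * Real.sign ω + 2 * π * n

section PhaseEquation

variable {m s : ℝ} {θ α β : ℝ → ℝ}

lemma exists_int_add_apply_mul_of_pos (hm : 0 < m)
    (hphase : HilbertPhaseEq m α β)
    {ω : ℝ} (h0 : 0 < ω) (h1 : ω < 2 * π) :
    ∃ n : ℤ, α ω + β (m * ω) = π / 2 + 2 * π * n := by
  have hmω : 0 < m * ω := mul_pos hm h0
  obtain ⟨n, hn⟩ := hphase (m * ω) (abs_pos.2 hmω.ne') (by rw [abs_of_pos hmω]; nlinarith)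
  rw [mul_div_cancel_left₀ _ hm.ne', Real.sign_of_pos hmω, mul_one] at hn
  exact ⟨n, hn⟩

lemma exists_int_eq_add_half (hm : 1 < m)
    (hαper : ∀ ω : ℝ, ∃ n : ℤ, α (ω + 2 * π / m) = α ω + 2 * π * n)
    (hβ : ∀ ω : ℝ, |ω| < 2 * π → β ω = s * ω)
    (hphase : HilbertPhaseEq m α β) :
    ∃ d : ℤ, s = d + 1 / 2 := by
  have hπ : |π| < 2 * π := by rw [abs_of_pos pi_pos]; linarith [pi_pos]
  have hπm : |π| < 2 * m * π := by rw [abs_of_pos pi_pos]; nlinarith [pi_pos]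
  obtain ⟨n₁, e₁⟩ := hphase π (abs_pos.2 pi_ne_zero) hπm
  obtain ⟨n₂, e₂⟩ := hphase (-π) (by simp [pi_ne_zero]) (by rwa [abs_neg])
  obtain ⟨n₃, e₃⟩ := hαper (-π / m)
  rw [hβ π hπ, Real.sign_of_pos pi_pos] at e₁
  rw [hβ (-π) (by rwa [abs_neg]), Real.sign_of_neg (neg_neg_of_pos pi_pos)] at e₂
  rw [show -π / m + 2 * π / m = π / m by ring] at e₃
  refine ⟨n₁ - n₂ - n₃, mul_right_cancel₀ two_pi_pos.ne' ?_⟩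
  push_cast
  linear_combination e₁ - e₂ - e₃

lemma exists_int_eq_sub_mul (hm : 1 < m)
    (hβ : ∀ ω : ℝ, |ω| < 2 * π → β ω = s * ω)
    (hphase : HilbertPhaseEq m α β)
    {ω : ℝ} (h0 : 0 < ω) (h1 : ω < 2 * π / m) :
    ∃ n : ℤ, α ω = π / 2 - s * m * ω + 2 * π * n := by
  have hm0 : 0 < m := by linarith
  have hmω : m * ω < 2 * π := by rwa [lt_div_iff₀ hm0, mul_comm] at h1
  obtain ⟨n, hn⟩ := exists_int_add_apply_mul_of_pos hm0 hphase h0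
    (h1.trans_le (div_le_self two_pi_pos.le hm.le))
  rw [hβ _ (by rwa [abs_of_pos (mul_pos hm0 h0)])] at hn
  exact ⟨n, by linear_combination hn⟩

lemma exists_int_eq_mul_sub_mul_pi (hm : 1 < m) (d : ℤ)
    (hαper : ∀ ω : ℝ, ∃ n : ℤ, α (ω + 2 * π / m) = α ω + 2 * π * n)
    (hβ : ∀ ω : ℝ, |ω| < 2 * π → β ω = (d + 1 / 2) * ω)
    (hβm : ∀ ω : ℝ, |ω| < 2 * π → β (m * ω) = θ ω + β ω)
    (hphase : HilbertPhaseEq m α β)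
    {p : ℕ} (hp : p + 1 ≤ m) {ω : ℝ} (h1 : 2 * p * π / m < ω) (h2 : ω < 2 * (p + 1) * π / m) :
    ∃ n : ℤ, θ ω = (d + 1 / 2) * (m - 1) * ω - p * π + 2 * π * n := by
  have hm0 : 0 < m := by linarith
  have hω0 : 0 < ω := lt_of_le_of_lt (by positivity) h1
  have hω2π : ω < 2 * π := by
    refine h2.trans_le ((div_le_iff₀ hm0).2 ?_)
    nlinarith [pi_pos]
  have habs : |ω| < 2 * π := by rwa [abs_of_pos hω0]
  obtain ⟨ω', hω'⟩ : ∃ ω', ω = ω' + p * (2 * π / m) := ⟨_, (sub_add_cancel _ _).symm⟩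
  have hmω' : m * ω' = m * ω - 2 * p * π := by
    rw [hω']
    field_simp
    ring
  obtain ⟨n₁, e₁⟩ := exists_int_apply_add_nat_mul hαper p ω'
  rw [← hω'] at e₁
  obtain ⟨n₂, e₂⟩ := exists_int_eq_sub_mul (ω := ω') hm hβ hphase
    (by linarith [show 2 * p * π / m = p * (2 * π / m) by ring])
    (by linarith [show 2 * (p + 1) * π / m = p * (2 * π / m) + 2 * π / m by ring])
  obtain ⟨n₃, e₃⟩ := exists_int_add_apply_mul_of_pos hm0 hphase hω0 hω2π
  rw [hβm ω habs, hβ ω habs] at e₃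
  -- the shift `(d + 1/2) · 2pπ` of `α` equals `pπ + 2π · dp`
  refine ⟨n₃ - n₁ - n₂ - d * p, ?_⟩
  push_cast
  linear_combination e₃ - e₁ - e₂ + (d + 1 / 2) * hmω'

end PhaseEquation

theorem stmt_3_general (M : ℕ) (hM : 2 ≤ M) (γ : ℝ) (θ₀ α β : ℝ → ℝ)
    (hodd : ∀ ω : ℝ, θ₀ (-ω) = -θ₀ ω)
    (hlin : ∀ ω : ℝ, 0 ≤ ω → ω < 2 * π / M → θ₀ ω = γ * ω)
    (hαper : ∀ ω : ℝ, ∃ n : ℤ, α (ω + 2 * π / M) = α ω + 2 * π * n)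
    (hβ : ∀ ω : ℝ, |ω| < 2 * M * π →
      HasSum (fun i : ℕ => θ₀ (ω / (M : ℝ) ^ (i + 1))) (β ω))
    (hmain : ∀ ω : ℝ, 0 < |ω| → |ω| < 2 * M * π →
      ∃ n : ℤ, α (ω / M) + β ω = π / 2 * Real.sign ω + 2 * π * n) :
    ∃ d : ℤ, γ = ((d : ℝ) + 1 / 2) * ((M : ℝ) - 1) ∧
      (∀ ω : ℝ, 0 < ω → ω < 2 * π / M →
        ∃ n : ℤ, α ω = π / 2 - ((d : ℝ) + 1 / 2) * M * ω + 2 * π * n) ∧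
      (∀ p : ℕ, p < M → ∀ ω : ℝ,
        2 * p * π / M < ω → ω < 2 * (p + 1) * π / M →
        ∃ n : ℤ, θ₀ ω = ((d : ℝ) + 1 / 2) * ((M : ℝ) - 1) * ω - p * π + 2 * π * n) := by
  have hM1 : (1 : ℝ) < M := by exact_mod_cast hM
  have hβ₀ (ω : ℝ) (hω : |ω| < 2 * π) :
      HasSum (fun i : ℕ => θ₀ (ω / (M : ℝ) ^ (i + 1))) (β ω) :=
    hβ ω (by nlinarith [abs_nonneg ω, pi_pos])
  have hβlin (ω : ℝ) (hω : |ω| < 2 * π) : β ω = γ / (M - 1) * ω := by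
    rw [div_mul_eq_mul_div]
    exact (hβ₀ ω hω).unique (hasSum_apply_div_pow_succ_of_odd hM1 hodd hlin hω)
  have hβM (ω : ℝ) (hω : |ω| < 2 * π) : β (M * ω) = θ₀ ω + β ω :=
    eq_apply_add_of_hasSum_div_pow_succ (by positivity) (hβ₀ ω hω)
      (hβ _ (by rw [abs_mul, Nat.abs_cast]; nlinarith))
  obtain ⟨d, hslope⟩ := exists_int_eq_add_half hM1 hαper hβlin hmain
  rw [hslope] at hβlin
  refine ⟨d, ?_, fun ω => exists_int_eq_sub_mul hM1 hβlin hmain,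
    fun p hp ω => exists_int_eq_mul_sub_mul_pi hM1 d hαper hβlin hβM hmain (by exact_mod_cast hp)⟩
  rw [← hslope, div_mul_cancel₀ _ (sub_pos.2 hM1).ne']

/-- Proposition 2: under a linear-phase assumption on `θ₀` on `[0, 2π/M)` and
`2π/M`-periodicity (mod 2π) of `α`, the solutions of the M-band Hilbert phase
equation are uniquely determined modulo 2π. -/
theorem stmt_3 (M : ℕ) (hM : 2 ≤ M) (γ : ℝ) (θ₀ α β : ℝ → ℝ)
    (hodd : ∀ ω : ℝ, θ₀ (-ω) = -θ₀ ω)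
    (hper : ∀ ω : ℝ, θ₀ (ω + 2 * π) = θ₀ ω)
    (hlin : ∀ ω : ℝ, 0 ≤ ω → ω < 2 * π / M → θ₀ ω = γ * ω)
    (hαper : ∀ ω : ℝ, ∃ n : ℤ, α (ω + 2 * π / M) = α ω + 2 * π * n)
    (hβ : ∀ ω : ℝ, |ω| < 2 * M * π →
      HasSum (fun i : ℕ => θ₀ (ω / (M : ℝ) ^ (i + 1))) (β ω))
    (hmain : ∀ ω : ℝ, 0 < |ω| → |ω| < 2 * M * π →
      ∃ n : ℤ, α (ω / M) + β ω = π / 2 * Real.sign ω + 2 * π * n) :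
    ∃ d : ℤ, γ = ((d : ℝ) + 1 / 2) * ((M : ℝ) - 1) ∧
      (∀ ω : ℝ, 0 < ω → ω < 2 * π / M →
        ∃ n : ℤ, α ω = π / 2 - ((d : ℝ) + 1 / 2) * M * ω + 2 * π * n) ∧
      (∀ p : ℕ, p < M → ∀ ω : ℝ,
        2 * p * π / M < ω → ω < 2 * (p + 1) * π / M →
        ∃ n : ℤ, θ₀ ω = ((d : ℝ) + 1 / 2) * ((M : ℝ) - 1) * ω - p * π + 2 * π * n) :=
  stmt_3_general M hM γ θ₀ α β hodd hlin hαper hβ hmain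
end

section
/- Let d ∈ ℤ and let h, g : ℤ → ℂ be finitely supported sequences. Suppose that for every ω ∈ (0, 2π), ∑_{k∈ℤ} g[k] e^{-ikω} = e^{-i(π/2 − (d + 1/2)ω)} · ∑_{k∈ℤ} h[k] e^{-ikω}. Then h[k] = 0 and g[k] = 0 for all k ∈ ℤ. -/
/-!
Both frequency responses are trigonometric polynomials, hence entire functions of the frequency,
so by the identity theorem the relation `G = c * H` on `(0, 2π)` holds on all of `ℂ`.
Shifting the frequency by `2π` leaves `G` and `H` unchanged but flips the sign of the phase
factor `c`, since `(d + 1/2) * 2π` is an odd multiple of `π`. Hence `c * H = -(c * H)`, so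
`H = 0`, then `G = 0`, and the coefficients vanish by orthogonality of the exponentials
on `[0, 2π]`.
-/

open Real Complex Function Filter Topology

noncomputable def trigSum (s : Finset ℤ) (f : ℤ → ℂ) (z : ℂ) : ℂ :=
  ∑ k ∈ s, f k * exp (-(k * z) * I)

lemma differentiable_trigSum (s : Finset ℤ) (f : ℤ → ℂ) : Differentiable ℂ (trigSum s f) := by
  unfold trigSum
  fun_prop

lemma periodic_trigSum (s : Finset ℤ) (f : ℤ → ℂ) : Periodic (trigSum s f) (2 * π) := by
  intro z
  refine Finset.sum_congr rfl fun k _ => ?_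
  rw [show -(k * (z + 2 * π)) * I = -(k * z) * I + (-k : ℤ) * (2 * π * I) by
      push_cast; ring,
    Complex.exp_add, exp_int_mul_two_pi_mul_I, mul_one]

lemma tsum_eq_trigSum {s : Finset ℤ} {f : ℤ → ℂ} (hf : support f ⊆ s) (ω : ℝ) :
    ∑' k : ℤ, f k * exp (-(((k : ℝ) * ω : ℝ) : ℂ) * I) = trigSum s f ω := by
  rw [tsum_eq_sum fun k hk => by rw [notMem_support.1 (mt (@hf k) hk), zero_mul]]
  push_cast
  rfl

lemma integral_exp_int_mul_I (n : ℤ) :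
    ∫ x in (0 : ℝ)..2 * π, exp (n * I * x) = if n = 0 then (2 * π : ℂ) else 0 := by
  split_ifs with hn
  · simp [hn]
  · have hc : (n : ℂ) * I ≠ 0 := mul_ne_zero (by exact_mod_cast hn) I_ne_zero
    have hperiod : exp (n * I * (2 * π)) = 1 := by
      rw [← exp_int_mul_two_pi_mul_I n]
      ring_nf
    simp [integral_exp_mul_complex hc, hperiod]

lemma integral_trigSum_mul_exp (s : Finset ℤ) (f : ℤ → ℂ) {m : ℤ} (hm : m ∈ s) :
    ∫ x in (0 : ℝ)..2 * π, trigSum s f x * exp (m * I * x) = 2 * π * f m := by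
  have hexpand (x : ℝ) :
      trigSum s f x * exp (m * I * x) = ∑ k ∈ s, f k * exp (((m - k : ℤ) : ℂ) * I * x) := by
    rw [trigSum, Finset.sum_mul]
    refine Finset.sum_congr rfl fun k _ => ?_
    rw [mul_assoc, ← Complex.exp_add]
    push_cast
    ring_nf
  simp_rw [hexpand]
  rw [intervalIntegral.integral_finsetSum fun k _ =>
    (by fun_prop : Continuous _).intervalIntegrable _ _]
  simp_rw [intervalIntegral.integral_const_mul, integral_exp_int_mul_I, sub_eq_zero, mul_ite,
    mul_zero]
  rw [Finset.sum_ite_eq s m]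
  simp [hm, mul_comm]

lemma eq_zero_of_trigSum_eq_zero {s : Finset ℤ} {f : ℤ → ℂ} (hf : support f ⊆ s)
    (h : ∀ ω : ℝ, trigSum s f ω = 0) : f = 0 := by
  funext m
  by_cases hm : m ∈ s
  · have := integral_trigSum_mul_exp s f hm
    simp only [h, zero_mul, intervalIntegral.integral_zero] at this
    exact (mul_eq_zero.1 this.symm).resolve_left (by simp [pi_ne_zero])
  · exact notMem_support.1 (mt (@hf m) hm)

noncomputable def hilbertPhase (d : ℤ) (z : ℂ) : ℂ :=
  exp (-(π / 2 - (d + 1 / 2) * z) * I)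

lemma differentiable_hilbertPhase (d : ℤ) : Differentiable ℂ (hilbertPhase d) := by
  unfold hilbertPhase
  fun_prop

lemma antiperiodic_hilbertPhase (d : ℤ) : Antiperiodic (hilbertPhase d) (2 * π) := by
  intro z
  rw [hilbertPhase, hilbertPhase,
    show -(π / 2 - (d + 1 / 2) * (z + 2 * π)) * I
      = -(π / 2 - (d + 1 / 2) * z) * I + (2 * d + 1 : ℤ) * (π * I) by push_cast; ring,
    Complex.exp_add, exp_int_mul, exp_pi_mul_I, Odd.neg_one_zpow ⟨d, rfl⟩, mul_neg_one]

lemma eq_zero_of_periodic_of_antiperiodic {α K : Type*} [Add α] [Field K] [CharZero K]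
    {G H c : α → K} {T : α} (hG : Periodic G T) (hH : Periodic H T) (hc : Antiperiodic c T)
    (hc0 : ∀ x, c x ≠ 0) (hGH : ∀ x, G x = c x * H x) : H = 0 := by
  funext x
  have hflip : c x * H x = -(c x * H x) :=
    calc c x * H x = G (x + T) := by rw [hG, hGH]
      _ = -(c x * H x) := by rw [hGH, hH, hc, neg_mul]
  exact (mul_eq_zero.1 (CharZero.eq_neg_self_iff.1 hflip)).resolve_left (hc0 x)

lemma eq_zero_of_forall_ofReal_mem_Ioo {E : Type*} [NormedAddCommGroup E] [NormedSpace ℂ E]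
    [CompleteSpace E] {F : ℂ → E} (hF : Differentiable ℂ F) {a b : ℝ} (hab : a < b)
    (h0 : ∀ x : ℝ, a < x → x < b → F x = 0) : F = 0 := by
  obtain ⟨x₀, hax₀, hx₀b⟩ := exists_between hab
  have hreal : ∀ᶠ x : ℝ in 𝓝[≠] x₀, F x = 0 :=
    eventually_nhdsWithin_of_eventually_nhds <|
      Filter.mem_of_superset (Ioo_mem_nhds hax₀ hx₀b) fun x hx => h0 x hx.1 hx.2
  have hcomplex : ∃ᶠ z in 𝓝[≠] (x₀ : ℂ), F z = 0 :=
    (continuous_ofReal.continuousWithinAt.tendsto_nhdsWithin fun _ _ ↦ by simp_all).frequently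
      hreal.frequently
  funext z
  exact (analyticOnNhd_univ_iff_differentiable.2 hF).eqOn_zero_of_preconnected_of_frequently_eq_zero
    isPreconnected_univ (Set.mem_univ _) hcomplex (Set.mem_univ z)

/-- Section II.D of the paper: a filter and its Hilbert-pair dual (whose
frequency responses differ by the phase factor `e^{-i(π/2 − (d+1/2)ω)}`)
cannot both be FIR unless they are zero. -/
theorem stmt_7 (d : ℤ) (h g : ℤ → ℂ)
    (hh : Set.Finite (Function.support h)) (hg : Set.Finite (Function.support g))
    (hrel : ∀ ω : ℝ, 0 < ω → ω < 2 * π →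
      (∑' k : ℤ, g k * Complex.exp (-(((k : ℝ) * ω : ℝ) : ℂ) * Complex.I))
        = Complex.exp (-((π / 2 - ((d : ℝ) + 1 / 2) * ω : ℝ) : ℂ) * Complex.I) *
          ∑' k : ℤ, h k * Complex.exp (-(((k : ℝ) * ω : ℝ) : ℂ) * Complex.I)) :
    ∀ k : ℤ, h k = 0 ∧ g k = 0 := by
  set s := hh.toFinset ∪ hg.toFinset
  have hsh : support h ⊆ s := fun k hk => Finset.mem_union_left _ (hh.mem_toFinset.2 hk)
  have hsg : support g ⊆ s := fun k hk => Finset.mem_union_right _ (hg.mem_toFinset.2 hk)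
  have hdiff : Differentiable ℂ (trigSum s g - hilbertPhase d * trigSum s h) :=
    (differentiable_trigSum s g).sub
      ((differentiable_hilbertPhase d).mul (differentiable_trigSum s h))
  have hrelC : trigSum s g - hilbertPhase d * trigSum s h = 0 :=
    eq_zero_of_forall_ofReal_mem_Ioo hdiff two_pi_pos fun ω hω₀ hω₁ => by
      rw [Pi.sub_apply, Pi.mul_apply, sub_eq_zero, ← tsum_eq_trigSum hsg,
        ← tsum_eq_trigSum hsh, hrel ω hω₀ hω₁, hilbertPhase]
      push_cast
      rfl
  have hG (z : ℂ) : trigSum s g z = hilbertPhase d z * trigSum s h z :=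
    sub_eq_zero.1 (congrFun hrelC z)
  have hH0 : trigSum s h = 0 := eq_zero_of_periodic_of_antiperiodic (periodic_trigSum s g)
    (periodic_trigSum s h) (antiperiodic_hilbertPhase d) (fun _ => exp_ne_zero _) hG
  have hG0 : ∀ ω : ℝ, trigSum s g ω = 0 := fun ω => by rw [hG, hH0, Pi.zero_apply, mul_zero]
  intro k
  exact ⟨congrFun (eq_zero_of_trigSum_eq_zero hsh fun ω => congrFun hH0 ω) k,
    congrFun (eq_zero_of_trigSum_eq_zero hsg hG0) k⟩
end

section
/- Let ψ, φ, ψ^H, φ^H : ℝ → ℝ be integrable functions whose Fourier transforms (ψ̂(ω) = ∫_ℝ ψ(t) e^{-iωt} dt, etc.) satisfy ψ̂^H(ω) = −i·sign(ω)·ψ̂(ω) and φ̂^H(ω) = −i·sign(ω)·φ̂(ω) for every ω ≠ 0. Define Ψ^a : ℝ² → ℝ by Ψ^a(x, y) = (1/2)(ψ(x)φ(y) − ψ^H(x)φ^H(y)), and let Ψ̂^a(ω_x, ω_y) = ∫_{ℝ²} Ψ^a(x, y) e^{-i(ω_x x + ω_y y)} dx dy be its two-dimensional Fourier transform. Then for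 all (ω_x, ω_y) with ω_x ≠ 0 and ω_y ≠ 0: Ψ̂^a(ω_x, ω_y) = ψ̂(ω_x)·φ̂(ω_y) if sign(ω_x) = sign(ω_y), and Ψ̂^a(ω_x, ω_y) = 0 if sign(ω_x) ≠ sign(ω_y). -/
/-!
Each side of `Ψᵃ` is a tensor product, so by Fubini its 2D Fourier transform is
`½ (ψ̂(ωx) φ̂(ωy) - ψ̂ᴴ(ωx) φ̂ᴴ(ωy))`. The Hilbert relations turn the second product into
`(-i)² sign ωx sign ωy ψ̂(ωx) φ̂(ωy) = -sign ωx sign ωy ψ̂(ωx) φ̂(ωy)`, and for nonzero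
frequencies `sign ωx sign ωy` is `1` or `-1` according as the signs agree or not.
-/

open Real MeasureTheory

lemma Integrable.mul_exp_neg_ofReal_mul_I {α : Type*} [MeasurableSpace α] {μ : Measure α}
    {f : α → ℂ} (hf : Integrable f μ) {θ : α → ℝ} (hθ : AEStronglyMeasurable θ μ) :
    Integrable (fun x => f x * Complex.exp (-(θ x : ℂ) * Complex.I)) μ := by
  refine hf.mul_bdd (c := 1) ?_ (Filter.Eventually.of_forall fun x => ?_)
  · exact Complex.continuous_exp.comp_aestronglyMeasurable
      ((Complex.continuous_ofReal.comp_aestronglyMeasurable hθ).neg.mul_const _)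
  · rw [← Complex.ofReal_neg, Complex.norm_exp_ofReal_mul_I]

lemma integral_prod_mul_sub_mul {α β : Type*} [MeasurableSpace α] [MeasurableSpace β]
    {μ : Measure α} {ν : Measure β} [SFinite μ] [SFinite ν] {f₁ g₁ : α → ℂ} {f₂ g₂ : β → ℂ}
    (hf₁ : Integrable f₁ μ) (hf₂ : Integrable f₂ ν) (hg₁ : Integrable g₁ μ)
    (hg₂ : Integrable g₂ ν) :
    ∫ z, (f₁ z.1 * f₂ z.2 - g₁ z.1 * g₂ z.2) ∂μ.prod ν
      = (∫ x, f₁ x ∂μ) * (∫ y, f₂ y ∂ν) - (∫ x, g₁ x ∂μ) * (∫ y, g₂ y ∂ν) := by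
  rw [integral_sub (hf₁.mul_prod hf₂) (hg₁.mul_prod hg₂), integral_prod_mul, integral_prod_mul]

lemma exp_neg_add_mul_I (a b : ℝ) :
    Complex.exp (-((a + b : ℝ) : ℂ) * Complex.I)
      = Complex.exp (-(a : ℂ) * Complex.I) * Complex.exp (-(b : ℂ) * Complex.I) := by
  rw [← Complex.exp_add]
  push_cast
  ring_nf

lemma half_mul_sub_hilbert_mul {a b : ℝ} (ha : a ≠ 0) (hb : b ≠ 0) (A B : ℂ) :
    1 / 2 * (A * B - (-Complex.I * (Real.sign a : ℂ) * A) * (-Complex.I * (Real.sign b : ℂ) * B))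
      = if Real.sign a = Real.sign b then A * B else 0 := by
  have hI : (-Complex.I * (Real.sign a : ℂ) * A) * (-Complex.I * (Real.sign b : ℂ) * B)
      = -((Real.sign a * Real.sign b : ℝ) : ℂ) * (A * B) := by
    push_cast
    linear_combination (Real.sign a * Real.sign b * A * B : ℂ) * Complex.I_sq
  rw [hI]
  rcases Real.sign_apply_eq_of_ne_zero a ha with sa | sa <;>
    rcases Real.sign_apply_eq_of_ne_zero b hb with sb | sb <;> norm_num [sa, sb] <;> ring

/-- Equation (42) of the paper: the real part of the tensor product of two
analytic wavelets selects frequencies in the first/third quadrants of the 2D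
frequency plane. -/
theorem stmt_11 (ψ φ ψH φH : ℝ → ℝ)
    (hψ : Integrable ψ) (hφ : Integrable φ)
    (hψH : Integrable ψH) (hφH : Integrable φH)
    (hHψ : ∀ ω : ℝ, ω ≠ 0 →
      (∫ t : ℝ, (ψH t : ℂ) * Complex.exp (-((ω * t : ℝ) : ℂ) * Complex.I))
        = -Complex.I * (Real.sign ω : ℂ) *
            ∫ t : ℝ, (ψ t : ℂ) * Complex.exp (-((ω * t : ℝ) : ℂ) * Complex.I))
    (hHφ : ∀ ω : ℝ, ω ≠ 0 →
      (∫ t : ℝ, (φH t : ℂ) * Complex.exp (-((ω * t : ℝ) : ℂ) * Complex.I))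
        = -Complex.I * (Real.sign ω : ℂ) *
            ∫ t : ℝ, (φ t : ℂ) * Complex.exp (-((ω * t : ℝ) : ℂ) * Complex.I)) :
    ∀ ωx ωy : ℝ, ωx ≠ 0 → ωy ≠ 0 →
      (∫ p : ℝ × ℝ,
          ((1 / 2 * (ψ p.1 * φ p.2 - ψH p.1 * φH p.2) : ℝ) : ℂ) *
            Complex.exp (-((ωx * p.1 + ωy * p.2 : ℝ) : ℂ) * Complex.I))
        = if Real.sign ωx = Real.sign ωy
          then (∫ t : ℝ, (ψ t : ℂ) * Complex.exp (-((ωx * t : ℝ) : ℂ) * Complex.I)) *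
               (∫ t : ℝ, (φ t : ℂ) * Complex.exp (-((ωy * t : ℝ) : ℂ) * Complex.I))
          else 0 := by
  intro ωx ωy hx hy
  have hint : ∀ f : ℝ → ℝ, Integrable f → ∀ ω : ℝ,
      Integrable (fun t => (f t : ℂ) * Complex.exp (-((ω * t : ℝ) : ℂ) * Complex.I)) :=
    fun f hf ω => Integrable.mul_exp_neg_ofReal_mul_I hf.ofReal (by fun_prop)
  have hsplit : ∀ p : ℝ × ℝ,
      ((1 / 2 * (ψ p.1 * φ p.2 - ψH p.1 * φH p.2) : ℝ) : ℂ) *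
          Complex.exp (-((ωx * p.1 + ωy * p.2 : ℝ) : ℂ) * Complex.I)
        = 1 / 2 * ((ψ p.1 : ℂ) * Complex.exp (-((ωx * p.1 : ℝ) : ℂ) * Complex.I)
            * ((φ p.2 : ℂ) * Complex.exp (-((ωy * p.2 : ℝ) : ℂ) * Complex.I))
          - (ψH p.1 : ℂ) * Complex.exp (-((ωx * p.1 : ℝ) : ℂ) * Complex.I)
            * ((φH p.2 : ℂ) * Complex.exp (-((ωy * p.2 : ℝ) : ℂ) * Complex.I))) := by
    intro p
    rw [exp_neg_add_mul_I]
    push_cast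
    ring
  simp_rw [hsplit]
  rw [integral_const_mul, Measure.volume_eq_prod, integral_prod_mul_sub_mul
      (hint ψ hψ ωx) (hint φ hφ ωy) (hint ψH hψH ωx) (hint φH hφH ωy),
    hHψ ωx hx, hHφ ωy hy, half_mul_sub_hilbert_mul hx hy]
end

section
/- Let ψ, φ, ψ^H, φ^H : ℝ → ℝ be integrable functions whose Fourier transforms (ψ̂(ω) = ∫_ℝ ψ(t) e^{-iωt} dt, etc.) satisfy ψ̂^H(ω) = −i·sign(ω)·ψ̂(ω) and φ̂^H(ω) = −i·sign(ω)·φ̂(ω) for every ω ≠ 0. Define Ψ^ā : ℝ² → ℝ by Ψ^ā(x, y) = (1/2)(ψ(x)φ(y) + ψ^H(x)φ^H(y)), and let Ψ̂^ā(ω_x, ω_y) = ∫_{ℝ²} Ψ^ā(x, y) e^{-i(ω_x x + ω_y y)} dx dy be its two-dimensional Fourier transform. Then for all (ω_x, ω_y) with ω_x ≠ 0 and ω_y ≠ 0: Ψ̂^ā(ω_x, ω_y) = ψ̂(ω_x)·φ̂(ω_y) if sign(ω_x) ≠ sign(ω_y), and Ψ̂^ā(ω_x, ω_y) = 0 if sign(ω_x)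 = sign(ω_y). -/
/-!
Since the kernel `e^{-i(ω_x x + ω_y y)}` factors, the 2D transform of `ψ ⊗ φ + ψ^H ⊗ φ^H`
is `ψ̂(ω_x) φ̂(ω_y) + ψ̂^H(ω_x) φ̂^H(ω_y) = (1 - sign ω_x · sign ω_y) ψ̂(ω_x) φ̂(ω_y)`,
using `(-i)² = -1`; for nonzero frequencies `1 - sign ω_x · sign ω_y` is `2` or `0`.
-/

open Real MeasureTheory

-- The angular-frequency convention of the paper, not Mathlib's `𝓕` (which uses `e^{-2πi ω t}`).
noncomputable def angularFourier (f : ℝ → ℝ) (ω : ℝ) : ℂ :=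
  ∫ t : ℝ, (f t : ℂ) * Complex.exp (-((ω * t : ℝ) : ℂ) * Complex.I)

theorem norm_cexp_neg_ofReal_mul_I (x : ℝ) : ‖Complex.exp (-(x : ℂ) * Complex.I)‖ = 1 := by
  rw [← Complex.ofReal_neg, Complex.norm_exp_ofReal_mul_I]

theorem MeasureTheory.Integrable.ofReal_mul_cexp_neg_mul_I {f : ℝ → ℝ} (hf : Integrable f)
    (ω : ℝ) :
    Integrable (fun t : ℝ => (f t : ℂ) * Complex.exp (-((ω * t : ℝ) : ℂ) * Complex.I)) :=
  hf.congr' (by fun_prop) (.of_forall fun t => by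
    rw [norm_mul, norm_cexp_neg_ofReal_mul_I, mul_one, Complex.norm_real])

theorem ofReal_mul_cexp_neg_add_mul_I (f g : ℝ → ℝ) (ωx ωy : ℝ) (p : ℝ × ℝ) :
    ((f p.1 * g p.2 : ℝ) : ℂ) * Complex.exp (-((ωx * p.1 + ωy * p.2 : ℝ) : ℂ) * Complex.I)
      = ((f p.1 : ℂ) * Complex.exp (-((ωx * p.1 : ℝ) : ℂ) * Complex.I)) *
          ((g p.2 : ℂ) * Complex.exp (-((ωy * p.2 : ℝ) : ℂ) * Complex.I)) := by
  rw [show -((ωx * p.1 + ωy * p.2 : ℝ) : ℂ) * Complex.I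
      = -((ωx * p.1 : ℝ) : ℂ) * Complex.I + -((ωy * p.2 : ℝ) : ℂ) * Complex.I by
        push_cast; ring, Complex.exp_add]
  push_cast
  ring

theorem integrable_ofReal_mul_mul_cexp {f g : ℝ → ℝ} (hf : Integrable f) (hg : Integrable g)
    (ωx ωy : ℝ) :
    Integrable (fun p : ℝ × ℝ =>
      ((f p.1 * g p.2 : ℝ) : ℂ) * Complex.exp (-((ωx * p.1 + ωy * p.2 : ℝ) : ℂ) * Complex.I)) := by
  simp only [ofReal_mul_cexp_neg_add_mul_I]
  exact (hf.ofReal_mul_cexp_neg_mul_I ωx).mul_prod (hg.ofReal_mul_cexp_neg_mul_I ωy)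

theorem integral_ofReal_mul_mul_cexp (f g : ℝ → ℝ) (ωx ωy : ℝ) :
    ∫ p : ℝ × ℝ,
        ((f p.1 * g p.2 : ℝ) : ℂ) * Complex.exp (-((ωx * p.1 + ωy * p.2 : ℝ) : ℂ) * Complex.I)
      = angularFourier f ωx * angularFourier g ωy := by
  simp only [ofReal_mul_cexp_neg_add_mul_I]
  rw [Measure.volume_eq_prod]
  exact integral_prod_mul
    (fun x : ℝ => (f x : ℂ) * Complex.exp (-((ωx * x : ℝ) : ℂ) * Complex.I))
    (fun y : ℝ => (g y : ℂ) * Complex.exp (-((ωy * y : ℝ) : ℂ) * Complex.I))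

theorem one_sub_sign_mul_sign_eq_ite {x y : ℝ} (hx : x ≠ 0) (hy : y ≠ 0) :
    1 - (Real.sign x : ℂ) * Real.sign y = if Real.sign x ≠ Real.sign y then 2 else 0 := by
  rcases Real.sign_apply_eq_of_ne_zero x hx with h₁ | h₁ <;>
    rcases Real.sign_apply_eq_of_ne_zero y hy with h₂ | h₂ <;>
    norm_num [h₁, h₂]

/-- Equation (44) of the paper: the real part of the tensor product of an
analytic wavelet and an anti-analytic wavelet selects frequencies in the
second/fourth quadrants of the 2D frequency plane. -/
theorem stmt_12 (ψ φ ψH φH : ℝ → ℝ)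
    (hψ : Integrable ψ) (hφ : Integrable φ)
    (hψH : Integrable ψH) (hφH : Integrable φH)
    (hHψ : ∀ ω : ℝ, ω ≠ 0 →
      (∫ t : ℝ, (ψH t : ℂ) * Complex.exp (-((ω * t : ℝ) : ℂ) * Complex.I))
        = -Complex.I * (Real.sign ω : ℂ) *
            ∫ t : ℝ, (ψ t : ℂ) * Complex.exp (-((ω * t : ℝ) : ℂ) * Complex.I))
    (hHφ : ∀ ω : ℝ, ω ≠ 0 →
      (∫ t : ℝ, (φH t : ℂ) * Complex.exp (-((ω * t : ℝ) : ℂ) * Complex.I))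
        = -Complex.I * (Real.sign ω : ℂ) *
            ∫ t : ℝ, (φ t : ℂ) * Complex.exp (-((ω * t : ℝ) : ℂ) * Complex.I)) :
    ∀ ωx ωy : ℝ, ωx ≠ 0 → ωy ≠ 0 →
      (∫ p : ℝ × ℝ,
          ((1 / 2 * (ψ p.1 * φ p.2 + ψH p.1 * φH p.2) : ℝ) : ℂ) *
            Complex.exp (-((ωx * p.1 + ωy * p.2 : ℝ) : ℂ) * Complex.I))
        = if Real.sign ωx ≠ Real.sign ωy
          then (∫ t : ℝ, (ψ t : ℂ) * Complex.exp (-((ωx * t : ℝ) : ℂ) * Complex.I)) *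
               (∫ t : ℝ, (φ t : ℂ) * Complex.exp (-((ωy * t : ℝ) : ℂ) * Complex.I))
          else 0 := by
  intro ωx ωy hx hy
  have hsplit : ∀ p : ℝ × ℝ,
      ((1 / 2 * (ψ p.1 * φ p.2 + ψH p.1 * φH p.2) : ℝ) : ℂ) *
          Complex.exp (-((ωx * p.1 + ωy * p.2 : ℝ) : ℂ) * Complex.I)
        = 1 / 2 * (((ψ p.1 * φ p.2 : ℝ) : ℂ) *
              Complex.exp (-((ωx * p.1 + ωy * p.2 : ℝ) : ℂ) * Complex.I) +
            ((ψH p.1 * φH p.2 : ℝ) : ℂ) *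
              Complex.exp (-((ωx * p.1 + ωy * p.2 : ℝ) : ℂ) * Complex.I)) := fun p => by
    push_cast; ring
  have hHψ' : angularFourier ψH ωx = -Complex.I * Real.sign ωx * angularFourier ψ ωx := hHψ ωx hx
  have hHφ' : angularFourier φH ωy = -Complex.I * Real.sign ωy * angularFourier φ ωy := hHφ ωy hy
  change _ = if _ then angularFourier ψ ωx * angularFourier φ ωy else 0
  rw [integral_congr_ae (.of_forall hsplit), integral_const_mul,
    integral_add (integrable_ofReal_mul_mul_cexp hψ hφ ωx ωy)
      (integrable_ofReal_mul_mul_cexp hψH hφH ωx ωy),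
    integral_ofReal_mul_mul_cexp, integral_ofReal_mul_mul_cexp, hHψ', hHφ']
  calc 1 / 2 * (angularFourier ψ ωx * angularFourier φ ωy +
          -Complex.I * Real.sign ωx * angularFourier ψ ωx *
            (-Complex.I * Real.sign ωy * angularFourier φ ωy))
      = 1 / 2 * (1 - (Real.sign ωx : ℂ) * Real.sign ωy) *
          (angularFourier ψ ωx * angularFourier φ ωy) := by
        linear_combination (1 / 2 * Real.sign ωx * Real.sign ωy * angularFourier ψ ωx *
          angularFourier φ ωy : ℂ) * Complex.I_sq
    _ = _ := by
        rw [one_sub_sign_mul_sign_eq_ite hx hy]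
        split_ifs <;> ring
end

section
/- Let d ∈ ℤ, let S : ℝ² → ℂ and u, v : ℝ → ℂ be functions such that for every k ∈ ℤ and every ω ∈ [2kπ, 2(k+1)π), v(ω) = (−1)^k e^{-i(d + 1/2)ω} u(ω). Fix (ω_x, ω_y) ∈ [0, 2π)² and suppose the family (S(ω_x + 2pπ, ω_y + 2qπ)·conj(u(ω_x + 2pπ))·conj(u(ω_y + 2qπ)))_{(p,q)∈ℤ²} is summable, with sum F₁(ω_x, ω_y). Then the family (S(ω_x + 2pπ, ω_y + 2qπ)·conj(v(ω_x + 2pπ))·conj(v(ω_y + 2qπ)))_{(p,q)∈ℤ²} is summable and its sum F₂(ω_x, ω_y) satisfies F₂(ω_x, ω_y) = e^{i(d + 1/2)(ω_x + ω_y)} F₁(ω_x, ω_y). -/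
open Real

lemma aux_exp_int_pi (n : ℤ) : Complex.exp ((n : ℂ) * ↑π * Complex.I) = (-1 : ℂ) ^ n := by
  rw [mul_assoc, Complex.exp_int_mul, Complex.exp_pi_mul_I]

lemma aux_cancel (d m : ℤ) (r : ℝ) :
    (-1 : ℂ) ^ m * Complex.exp (((((d : ℝ) + 1 / 2) * (r + 2 * m * π) : ℝ) : ℂ) * Complex.I)
      = Complex.exp (((((d : ℝ) + 1 / 2) * r : ℝ) : ℂ) * Complex.I) := by
  have h : ((((d : ℝ) + 1 / 2) * (r + 2 * m * π) : ℝ) : ℂ) * Complex.I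
      = ((((d : ℝ) + 1 / 2) * r : ℝ) : ℂ) * Complex.I
        + ((((2 * d + 1) * m : ℤ) : ℂ)) * ↑π * Complex.I := by
    push_cast; ring
  rw [h, Complex.exp_add, aux_exp_int_pi]
  have h2 : ((-1 : ℂ)) ^ ((2 * d + 1) * m) = (-1 : ℂ) ^ m := by
    have e : (2 * d + 1) * m = m + 2 * (d * m) := by ring
    rw [e, zpow_add₀ (by norm_num : (-1 : ℂ) ≠ 0), zpow_mul]
    norm_num
  rw [h2, ← mul_assoc, mul_comm ((-1:ℂ)^m), mul_assoc, ← mul_zpow]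
  norm_num

lemma aux_conj (d k : ℤ) (r : ℝ) (z : ℂ) :
    (starRingEnd ℂ) ((-1 : ℂ) ^ k *
        Complex.exp (-((((d : ℝ) + 1 / 2) * r : ℝ) : ℂ) * Complex.I) * z)
      = (-1 : ℂ) ^ k *
        Complex.exp (((((d : ℝ) + 1 / 2) * r : ℝ) : ℂ) * Complex.I) * (starRingEnd ℂ) z := by
  rw [map_mul, map_mul, map_zpow₀, map_neg, map_one, ← Complex.exp_conj]
  congr 2
  rw [map_mul, map_neg, Complex.conj_ofReal, Complex.conj_I]
  ring

/-- Equation (37) of the paper: the dual prefilter equals the primal prefilter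
up to the phase factor `e^{i(d+1/2)(ω_x+ω_y)}`. -/
theorem stmt_14 (d : ℤ) (S : ℝ × ℝ → ℂ) (u v : ℝ → ℂ)
    (hv : ∀ k : ℤ, ∀ ω : ℝ, 2 * k * π ≤ ω → ω < 2 * ((k : ℝ) + 1) * π →
      v ω = (-1 : ℂ) ^ k *
        Complex.exp (-((((d : ℝ) + 1 / 2) * ω : ℝ) : ℂ) * Complex.I) * u ω)
    (ωx ωy : ℝ) (hωx : 0 ≤ ωx) (hωx' : ωx < 2 * π)
    (hωy : 0 ≤ ωy) (hωy' : ωy < 2 * π)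
    (F₁ : ℂ)
    (hF₁ : HasSum (fun pq : ℤ × ℤ =>
      S (ωx + 2 * pq.1 * π, ωy + 2 * pq.2 * π) *
        (starRingEnd ℂ) (u (ωx + 2 * pq.1 * π)) *
        (starRingEnd ℂ) (u (ωy + 2 * pq.2 * π))) F₁) :
    HasSum (fun pq : ℤ × ℤ =>
      S (ωx + 2 * pq.1 * π, ωy + 2 * pq.2 * π) *
        (starRingEnd ℂ) (v (ωx + 2 * pq.1 * π)) *
        (starRingEnd ℂ) (v (ωy + 2 * pq.2 * π)))
      (Complex.exp (((((d : ℝ) + 1 / 2) * (ωx + ωy) : ℝ) : ℂ) * Complex.I) * F₁) := by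
  have key : (fun pq : ℤ × ℤ =>
      S (ωx + 2 * pq.1 * π, ωy + 2 * pq.2 * π) *
        (starRingEnd ℂ) (v (ωx + 2 * pq.1 * π)) *
        (starRingEnd ℂ) (v (ωy + 2 * pq.2 * π)))
      = (fun pq : ℤ × ℤ =>
        Complex.exp (((((d : ℝ) + 1 / 2) * (ωx + ωy) : ℝ) : ℂ) * Complex.I) *
        (S (ωx + 2 * pq.1 * π, ωy + 2 * pq.2 * π) *
          (starRingEnd ℂ) (u (ωx + 2 * pq.1 * π)) *
          (starRingEnd ℂ) (u (ωy + 2 * pq.2 * π)))) := by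
    funext pq
    obtain ⟨p, q⟩ := pq
    have hπ := Real.pi_pos
    have ep : (2 : ℝ) * ((p : ℝ) + 1) * π = 2 * (p : ℝ) * π + 2 * π := by ring
    have eq' : (2 : ℝ) * ((q : ℝ) + 1) * π = 2 * (q : ℝ) * π + 2 * π := by ring
    have hX := hv p (ωx + 2 * (p : ℝ) * π) (by linarith) (by rw [ep]; linarith)
    have hY := hv q (ωy + 2 * (q : ℝ) * π) (by linarith) (by rw [eq']; linarith)
    simp only
    rw [hX, hY, aux_conj, aux_conj]
    have cx := aux_cancel d p ωx
    have cy := aux_cancel d q ωy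
    calc S (ωx + 2 * (p:ℝ) * π, ωy + 2 * (q:ℝ) * π) *
          ((-1:ℂ) ^ p * Complex.exp (((((d:ℝ)+1/2) * (ωx + 2*(p:ℝ)*π) : ℝ):ℂ) * Complex.I) *
            (starRingEnd ℂ) (u (ωx + 2 * (p:ℝ) * π))) *
          ((-1:ℂ) ^ q * Complex.exp (((((d:ℝ)+1/2) * (ωy + 2*(q:ℝ)*π) : ℝ):ℂ) * Complex.I) *
            (starRingEnd ℂ) (u (ωy + 2 * (q:ℝ) * π)))
        = ((-1:ℂ) ^ p * Complex.exp (((((d:ℝ)+1/2) * (ωx + 2*(p:ℝ)*π) : ℝ):ℂ) * Complex.I)) *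
          ((-1:ℂ) ^ q * Complex.exp (((((d:ℝ)+1/2) * (ωy + 2*(q:ℝ)*π) : ℝ):ℂ) * Complex.I)) *
          (S (ωx + 2 * (p:ℝ) * π, ωy + 2 * (q:ℝ) * π) *
            (starRingEnd ℂ) (u (ωx + 2 * (p:ℝ) * π)) *
            (starRingEnd ℂ) (u (ωy + 2 * (q:ℝ) * π))) := by ring
      _ = _ := by
          rw [cx, cy, ← Complex.exp_add]
          congr 2
          push_cast
          ring
  rw [key]
  exact hF₁.mul_left _
end

section
/- Let S : ℝ² → ℂ and u : ℝ → ℂ be functions, fix (ω_x, ω_y) ∈ ℝ², and let B_s ≥ 0, C_s ≥ 0. Assume: ∑_{p∈ℤ} |u(ω_x + 2pπ)|² = 1 and ∑_{q∈ℤ} |u(ω_y + 2qπ)|² = 1; |S(ω_x, ω_y)| ≤ B_s; and ∑_{(p,q)∈ℤ², (p,q)≠(0,0)} |S(ω_x + 2pπ, ω_y + 2qπ)|² ≤ C_s. Then the family (S(ω_x + 2pπ, ω_y + 2qπ)·conj(u(ω_x + 2pπ))·conj(u(ω_y + 2qπ)))_{(p,q)∈ℤ²} is summable and its sum F₁(ω_x,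 ω_y) satisfies |F₁(ω_x, ω_y)| ≤ √(B_s² + C_s). -/
open Real

/-! The summand factors as `S · (conj u ⊗ conj u)`. The second factor is square-summable with
sum `1` by the orthonormality conditions, the first with sum `|S(ω)|² + tail ≤ B_s² + C_s`, so
Cauchy–Schwarz gives both summability and the bound. -/

lemma HasSum.of_hasSum_ite_eq_zero {ι α : Type*} [AddCommMonoid α] [TopologicalSpace α]
    [ContinuousAdd α] [DecidableEq ι] {f : ι → α} {c : α} (j : ι)
    (h : HasSum (fun i => if i = j then 0 else f i) c) : HasSum f (f j + c) := by
  convert (hasSum_ite_eq j (f j)).add h using 1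
  funext i
  split_ifs with hij
  · rw [hij, add_zero]
  · rw [_root_.zero_add]

lemma exists_hasSum_mul_and_norm_le_sqrt_mul_sqrt {ι R : Type*} [NormedRing R] [CompleteSpace R]
    {x y : ι → R} {A B : ℝ} (hx : HasSum (fun i => ‖x i‖ ^ 2) A)
    (hy : HasSum (fun i => ‖y i‖ ^ 2) B) :
    ∃ s, HasSum (fun i => x i * y i) s ∧ ‖s‖ ≤ √A * √B := by
  have hA : 0 ≤ A := hx.nonneg fun i => by positivity
  have hB : 0 ≤ B := hy.nonneg fun i => by positivity
  obtain ⟨C, -, hCle, hC⟩ := inner_le_Lp_mul_Lq_hasSum_of_nonneg Real.HolderConjugate.two_two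
    (sqrt_nonneg A) (sqrt_nonneg B) (fun i => norm_nonneg (x i)) (fun i => norm_nonneg (y i))
    (by simpa only [rpow_two, sq_sqrt hA] using hx) (by simpa only [rpow_two, sq_sqrt hB] using hy)
  have hbound : ∀ i, ‖x i * y i‖ ≤ ‖x i‖ * ‖y i‖ := fun i => norm_mul_le _ _
  have hsum : Summable fun i => x i * y i := hC.summable.of_norm_bounded hbound
  exact ⟨_, hsum.hasSum, (tsum_of_norm_bounded hC hbound).trans hCle⟩

theorem stmt_15_general (S : ℝ × ℝ → ℂ) (u : ℝ → ℂ) (ωx ωy : ℝ) (Bs Cs : ℝ)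
    (hux : HasSum (fun p : ℤ => ‖u (ωx + 2 * p * π)‖ ^ 2) 1)
    (huy : HasSum (fun q : ℤ => ‖u (ωy + 2 * q * π)‖ ^ 2) 1)
    (hS0 : ‖S (ωx, ωy)‖ ≤ Bs)
    (hStail : ∃ c : ℝ, c ≤ Cs ∧ HasSum (fun pq : ℤ × ℤ =>
      if pq = (0, 0) then 0
      else ‖S (ωx + 2 * pq.1 * π, ωy + 2 * pq.2 * π)‖ ^ 2) c) :
    ∃ F₁ : ℂ, HasSum (fun pq : ℤ × ℤ =>
        S (ωx + 2 * pq.1 * π, ωy + 2 * pq.2 * π) *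
          (starRingEnd ℂ) (u (ωx + 2 * pq.1 * π)) *
          (starRingEnd ℂ) (u (ωy + 2 * pq.2 * π))) F₁ ∧
      ‖F₁‖ ≤ Real.sqrt (Bs ^ 2 + Cs) := by
  obtain ⟨c, hcCs, hc⟩ := hStail
  have hS : HasSum (fun pq : ℤ × ℤ => ‖S (ωx + 2 * pq.1 * π, ωy + 2 * pq.2 * π)‖ ^ 2)
      (‖S (ωx, ωy)‖ ^ 2 + c) := by
    simpa using hc.of_hasSum_ite_eq_zero (0, 0)
  have hu : HasSum (fun pq : ℤ × ℤ =>
      ‖(starRingEnd ℂ) (u (ωx + 2 * pq.1 * π)) * (starRingEnd ℂ) (u (ωy + 2 * pq.2 * π))‖ ^ 2)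
      1 := by
    have hprod := hux.summable.mul_of_nonneg huy.summable (fun _ => by positivity)
      (fun _ => by positivity)
    simpa [mul_pow] using hux.mul huy hprod
  obtain ⟨F₁, hF₁, hF₁le⟩ := exists_hasSum_mul_and_norm_le_sqrt_mul_sqrt hS hu
  refine ⟨F₁, by simpa only [mul_assoc] using hF₁, hF₁le.trans ?_⟩
  have hS0sq : ‖S (ωx, ωy)‖ ^ 2 ≤ Bs ^ 2 := pow_le_pow_left₀ (norm_nonneg _) hS0 2
  rw [sqrt_one, mul_one]
  exact sqrt_le_sqrt (by linarith)

/-- Upper bound on the prefilter frequency response `F₁` (Appendix C of the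
paper, part of Proposition 5), proved via the Cauchy–Schwarz inequality. -/
theorem stmt_15 (S : ℝ × ℝ → ℂ) (u : ℝ → ℂ) (ωx ωy : ℝ) (Bs Cs : ℝ)
    (hBs : 0 ≤ Bs) (hCs : 0 ≤ Cs)
    (hux : HasSum (fun p : ℤ => ‖u (ωx + 2 * p * π)‖ ^ 2) 1)
    (huy : HasSum (fun q : ℤ => ‖u (ωy + 2 * q * π)‖ ^ 2) 1)
    (hS0 : ‖S (ωx, ωy)‖ ≤ Bs)
    (hStail : ∃ c : ℝ, c ≤ Cs ∧ HasSum (fun pq : ℤ × ℤ =>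
      if pq = (0, 0) then 0
      else ‖S (ωx + 2 * pq.1 * π, ωy + 2 * pq.2 * π)‖ ^ 2) c) :
    ∃ F₁ : ℂ, HasSum (fun pq : ℤ × ℤ =>
        S (ωx + 2 * pq.1 * π, ωy + 2 * pq.2 * π) *
          (starRingEnd ℂ) (u (ωx + 2 * pq.1 * π)) *
          (starRingEnd ℂ) (u (ωy + 2 * pq.2 * π))) F₁ ∧
      ‖F₁‖ ≤ Real.sqrt (Bs ^ 2 + Cs) :=
  stmt_15_general S u ωx ωy Bs Cs hux huy hS0 hStail
end

section
/- Let S : ℝ² → ℂ and u : ℝ → ℂ be functions, fix (ω_x, ω_y) ∈ ℝ², and let A_s ≥ 0, A_ψ ≥ 0, C_s ≥ 0. Assume: ∑_{p∈ℤ} |u(ω_x + 2pπ)|² = 1 and ∑_{q∈ℤ} |u(ω_y + 2qπ)|² = 1; |S(ω_x, ω_y)| ≥ A_s; |u(ω_x)| ≥ A_ψ and |u(ω_y)| ≥ A_ψ; and ∑_{(p,q)∈ℤ², (p,q)≠(0,0)} |S(ω_x + 2pπ, ω_y + 2qπ)|² ≤ C_s. Then the family (S(ω_x + 2pπ, ω_y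 + 2qπ)·conj(u(ω_x + 2pπ))·conj(u(ω_y + 2qπ)))_{(p,q)∈ℤ²} is summable and its sum F₁(ω_x, ω_y) satisfies |F₁(ω_x, ω_y)| ≥ A_s·A_ψ² − √C_s. -/
/-!
The `(0,0)` term has modulus at least `A_s A_ψ²`. Every other term has modulus
`|S| · w` with weights `w(p,q) = |u(ω_x + 2pπ)| |u(ω_y + 2qπ)|`, whose squares sum to `1` over `ℤ²`
(the product of the two normalisations). By Cauchy–Schwarz against the square-summable tail of `S`,
the remaining terms are absolutely summable with total at most `√C_s`, and the triangle inequality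
concludes.
-/

open Real

variable {ι κ : Type*}

theorem HasSum.mul_of_nonneg {f : ι → ℝ} {g : κ → ℝ} {a b : ℝ} (hf : HasSum f a)
    (hg : HasSum g b) (hf₀ : ∀ i, 0 ≤ f i) (hg₀ : ∀ k, 0 ≤ g k) :
    HasSum (fun x : ι × κ => f x.1 * g x.2) (a * b) :=
  hf.mul hg (hf.summable.mul_of_nonneg hg.summable hf₀ hg₀)

theorem exists_hasSum_mul_le_sqrt_mul_sqrt {f g : ι → ℝ} {a b : ℝ} (hf₀ : ∀ i, 0 ≤ f i)
    (hg₀ : ∀ i, 0 ≤ g i) (hf : HasSum (fun i => f i ^ 2) a) (hg : HasSum (fun i => g i ^ 2) b) :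
    ∃ C, HasSum (fun i => f i * g i) C ∧ C ≤ √a * √b := by
  have ha : 0 ≤ a := hf.nonneg fun i => sq_nonneg (f i)
  have hb : 0 ≤ b := hg.nonneg fun i => sq_nonneg (g i)
  obtain ⟨C, -, hCle, hC⟩ := inner_le_Lp_mul_Lq_hasSum_of_nonneg Real.HolderConjugate.two_two
    (sqrt_nonneg a) (sqrt_nonneg b) hf₀ hg₀ (by simpa [rpow_two, sq_sqrt ha] using hf)
    (by simpa [rpow_two, sq_sqrt hb] using hg)
  exact ⟨C, hC, hCle⟩

theorem exists_hasSum_norm_sub_le_norm_of_norm_le_of_ne {E : Type*} [NormedAddCommGroup E]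
    [CompleteSpace E] [DecidableEq ι] {a : ι → E} {g : ι → ℝ} {C : ℝ} (i₀ : ι)
    (hg : HasSum g C) (hg₀ : 0 ≤ g i₀) (ha : ∀ i ≠ i₀, ‖a i‖ ≤ g i) :
    ∃ F, HasSum a F ∧ ‖a i₀‖ - C ≤ ‖F‖ := by
  set tail : ι → E := fun i => if i = i₀ then 0 else a i
  have htail : ∀ i, ‖tail i‖ ≤ g i := by
    intro i
    by_cases h : i = i₀
    · simp [tail, h, hg₀]
    · simpa [tail, h] using ha i h
  obtain ⟨T, hT⟩ := Summable.of_norm_bounded hg.summable htail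
  have hsplit : HasSum a (a i₀ + T) := by
    convert (hasSum_ite_eq i₀ (a i₀)).add hT using 2 with i
    by_cases h : i = i₀ <;> simp [tail, h]
  refine ⟨_, hsplit, ?_⟩
  have hTC : ‖T‖ ≤ C := hT.norm_le_of_bounded hg htail
  have hmain : ‖a i₀‖ ≤ ‖a i₀ + T‖ + ‖T‖ := by simpa using norm_sub_le (a i₀ + T) T
  linarith

theorem stmt_16_general (S : ℝ × ℝ → ℂ) (u : ℝ → ℂ) (ωx ωy : ℝ) (As Aψ Cs : ℝ)
    (hAψ : 0 ≤ Aψ)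
    (hux : HasSum (fun p : ℤ => ‖u (ωx + 2 * p * π)‖ ^ 2) 1)
    (huy : HasSum (fun q : ℤ => ‖u (ωy + 2 * q * π)‖ ^ 2) 1)
    (hS0 : As ≤ ‖S (ωx, ωy)‖)
    (hux0 : Aψ ≤ ‖u ωx‖) (huy0 : Aψ ≤ ‖u ωy‖)
    (hStail : ∃ c : ℝ, c ≤ Cs ∧ HasSum (fun pq : ℤ × ℤ =>
      if pq = (0, 0) then 0
      else ‖S (ωx + 2 * pq.1 * π, ωy + 2 * pq.2 * π)‖ ^ 2) c) :
    ∃ F₁ : ℂ, HasSum (fun pq : ℤ × ℤ =>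
        S (ωx + 2 * pq.1 * π, ωy + 2 * pq.2 * π) *
          (starRingEnd ℂ) (u (ωx + 2 * pq.1 * π)) *
          (starRingEnd ℂ) (u (ωy + 2 * pq.2 * π))) F₁ ∧
      As * Aψ ^ 2 - Real.sqrt Cs ≤ ‖F₁‖ := by
  obtain ⟨c, hcCs, hc⟩ := hStail
  set w : ℤ × ℤ → ℝ := fun pq => ‖u (ωx + 2 * pq.1 * π)‖ * ‖u (ωy + 2 * pq.2 * π)‖
  set s : ℤ × ℤ → ℝ := fun pq =>
    if pq = (0, 0) then 0 else ‖S (ωx + 2 * pq.1 * π, ωy + 2 * pq.2 * π)‖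
  have hw : HasSum (fun pq => w pq ^ 2) 1 := by
    simpa [w, mul_pow] using
      hux.mul_of_nonneg huy (fun _ => sq_nonneg _) (fun _ => sq_nonneg _)
  have hs : HasSum (fun pq => s pq ^ 2) c := by
    simpa [s, apply_ite (· ^ 2)] using hc
  obtain ⟨C, hC, hCle⟩ := exists_hasSum_mul_le_sqrt_mul_sqrt
    (fun pq => by positivity) (fun pq => by positivity) hs hw
  set a : ℤ × ℤ → ℂ := fun pq => S (ωx + 2 * pq.1 * π, ωy + 2 * pq.2 * π) *
    (starRingEnd ℂ) (u (ωx + 2 * pq.1 * π)) * (starRingEnd ℂ) (u (ωy + 2 * pq.2 * π))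
  obtain ⟨F₁, hF₁, hF₁le⟩ := exists_hasSum_norm_sub_le_norm_of_norm_le_of_ne (a := a) (0, 0) hC
    (by simp [s]) (fun pq h => by simp [a, s, w, h, mul_assoc])
  refine ⟨F₁, hF₁, ?_⟩
  have hmain : As * Aψ ^ 2 ≤ ‖S (ωx, ωy)‖ * ‖u ωx‖ * ‖u ωy‖ := by
    rw [sq, ← mul_assoc]
    exact mul_le_mul (mul_le_mul hS0 hux0 hAψ (norm_nonneg _)) huy0 hAψ (by positivity)
  rw [sqrt_one, mul_one] at hCle
  have hCs : C ≤ √Cs := hCle.trans (sqrt_le_sqrt hcCs)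
  simp only [a, Int.cast_zero, mul_zero, zero_mul, add_zero, norm_mul, Complex.norm_conj] at hF₁le
  linarith

/-- Lower bound on the prefilter frequency response `F₁` (Appendix C of the
paper, part of Proposition 5), obtained by isolating the `(p,q) = (0,0)` term
and bounding the remainder via Cauchy–Schwarz. -/
theorem stmt_16 (S : ℝ × ℝ → ℂ) (u : ℝ → ℂ) (ωx ωy : ℝ) (As Aψ Cs : ℝ)
    (hAs : 0 ≤ As) (hAψ : 0 ≤ Aψ) (hCs : 0 ≤ Cs)
    (hux : HasSum (fun p : ℤ => ‖u (ωx + 2 * p * π)‖ ^ 2) 1)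
    (huy : HasSum (fun q : ℤ => ‖u (ωy + 2 * q * π)‖ ^ 2) 1)
    (hS0 : As ≤ ‖S (ωx, ωy)‖)
    (hux0 : Aψ ≤ ‖u ωx‖) (huy0 : Aψ ≤ ‖u ωy‖)
    (hStail : ∃ c : ℝ, c ≤ Cs ∧ HasSum (fun pq : ℤ × ℤ =>
      if pq = (0, 0) then 0
      else ‖S (ωx + 2 * pq.1 * π, ωy + 2 * pq.2 * π)‖ ^ 2) c) :
    ∃ F₁ : ℂ, HasSum (fun pq : ℤ × ℤ =>
        S (ωx + 2 * pq.1 * π, ωy + 2 * pq.2 * π) *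
          (starRingEnd ℂ) (u (ωx + 2 * pq.1 * π)) *
          (starRingEnd ℂ) (u (ωy + 2 * pq.2 * π))) F₁ ∧
      As * Aψ ^ 2 - Real.sqrt Cs ≤ ‖F₁‖ :=
  stmt_16_general S u ωx ωy As Aψ Cs hAψ hux huy hS0 hux0 huy0 hStail
end

section
/- Let M ≥ 2 be an integer and d ∈ ℤ. Let θ̃₀ : ℝ → ℝ be the 2π-periodic function such that for every ω ∈ [0, 2π), θ̃₀(ω) = (d + 1/2)(M − 1)ω − ⌊Mω/(2π)⌋·π. Let H₀ : ℝ → ℂ and let ω ≥ 0 be such that the infinite product ψ̂₀(ω) := lim_{n→∞} ∏_{i=1}^{n} M^{-1/2} H₀(ω/M^{i}) converges. Then the infinite product ψ̂₀^H(ω) := lim_{n→∞} ∏_{i=1}^{n} M^{-1/2} e^{-iθ̃₀(ω/M^{i})} H₀(ω/M^{i}) also converges, and for every k ∈ ℕ with ω ∈ [2kπ, 2(k+1)π) one has ψ̂₀^H(ω) = (−1)^k e^{-i(d + 1/2)ω} ψ̂₀(ω). -/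
open Real Filter

noncomputable def Gfun (d : ℤ) (x : ℝ) : ℂ :=
  (-1 : ℂ) ^ ⌊x / (2 * π)⌋ * Complex.exp (-((((d : ℝ) + 1 / 2) * x : ℝ) : ℂ) * Complex.I)

lemma Gfun_ne_zero (d : ℤ) (x : ℝ) : Gfun d x ≠ 0 := by
  unfold Gfun
  exact mul_ne_zero (zpow_ne_zero _ (by norm_num)) (Complex.exp_ne_zero _)

lemma neg_one_zpow_add (a b : ℤ) : (-1 : ℂ) ^ (a + b) = (-1) ^ a * (-1) ^ b := by
  rw [zpow_add₀ (by norm_num : (-1:ℂ) ≠ 0)]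

lemma exp_int_pi : ∀ n : ℤ, Complex.exp ((n : ℂ) * (↑π * Complex.I)) = (-1 : ℂ) ^ n := by
  intro n
  rw [Complex.exp_int_mul, Complex.exp_pi_mul_I]

lemma Gfun_add (d : ℤ) (x : ℝ) : Gfun d (x + 2 * π) = Gfun d x := by
  unfold Gfun
  have hπ : (2 * π) ≠ 0 := by positivity
  have hfl : ⌊(x + 2 * π) / (2 * π)⌋ = ⌊x / (2 * π)⌋ + 1 := by
    rw [add_div, div_self hπ, Int.floor_add_one]
  rw [hfl, neg_one_zpow_add]
  have : Complex.exp (-((((d : ℝ) + 1 / 2) * (x + 2 * π) : ℝ) : ℂ) * Complex.I)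
      = Complex.exp (-((((d : ℝ) + 1 / 2) * x : ℝ) : ℂ) * Complex.I) *
        Complex.exp (((-(2 * d + 1) : ℤ) : ℂ) * (↑π * Complex.I)) := by
    rw [← Complex.exp_add]
    congr 1
    push_cast
    ring
  rw [this, exp_int_pi]
  have hodd : Odd (-(2 * d + 1)) := ⟨-(d+1), by ring⟩
  rw [hodd.neg_one_zpow]
  ring

lemma Gfun_add_nat (d : ℤ) (m : ℕ) (x : ℝ) : Gfun d (x + 2 * π * m) = Gfun d x := by
  induction m with
  | zero => simp
  | succ n ih =>
    have : x + 2 * π * (n + 1 : ℕ) = (x + 2 * π * n) + 2 * π := by push_cast; ring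
    rw [this, Gfun_add, ih]

lemma key_lemma (M : ℕ) (d : ℤ) (θ₀ : ℝ → ℝ)
    (hper : ∀ ω : ℝ, θ₀ (ω + 2 * π) = θ₀ ω)
    (hval : ∀ ω : ℝ, 0 ≤ ω → ω < 2 * π →
      θ₀ ω = ((d : ℝ) + 1 / 2) * ((M : ℝ) - 1) * ω - (⌊(M : ℝ) * ω / (2 * π)⌋ : ℝ) * π) :
    ∀ x : ℝ, 0 ≤ x →
      Complex.exp (-(θ₀ x : ℂ) * Complex.I) * Gfun d x = Gfun d ((M : ℝ) * x) := by
  have hπ : (0:ℝ) < 2 * π := by positivity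
  suffices h : ∀ n : ℕ, ∀ x : ℝ, 0 ≤ x → x < 2 * π * (n + 1) →
      Complex.exp (-(θ₀ x : ℂ) * Complex.I) * Gfun d x = Gfun d ((M : ℝ) * x) by
    intro x hx
    obtain ⟨n, hn⟩ := exists_nat_gt (x / (2 * π))
    exact h n x hx (by
      have := (div_lt_iff₀ hπ).mp hn
      nlinarith [hπ])
  intro n
  induction n with
  | zero =>
    intro x hx hx2
    have hx2' : x < 2 * π := by simpa using hx2
    have hfl0 : ⌊x / (2 * π)⌋ = 0 := by
      rw [Int.floor_eq_zero_iff]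
      constructor
      · positivity
      · rw [div_lt_one hπ]; exact hx2'
    unfold Gfun
    rw [hfl0, hval x hx hx2']
    rw [zpow_zero, one_mul, ← Complex.exp_add]
    have : -(((((d : ℝ) + 1 / 2) * ((M : ℝ) - 1) * x -
          (⌊(M : ℝ) * x / (2 * π)⌋ : ℝ) * π : ℝ)) : ℂ) * Complex.I +
        -((((d : ℝ) + 1 / 2) * x : ℝ) : ℂ) * Complex.I
        = ((⌊(M : ℝ) * x / (2 * π)⌋ : ℤ) : ℂ) * (↑π * Complex.I) +
          -((((d : ℝ) + 1 / 2) * ((M : ℝ) * x) : ℝ) : ℂ) * Complex.I := by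
      push_cast
      ring
    rw [this, Complex.exp_add, exp_int_pi]
  | succ n ih =>
    intro x hx hx2
    by_cases hc : x < 2 * π * (n + 1)
    · exact ih x hx hc
    · push_neg at hc
      have hy : 0 ≤ x - 2 * π := by nlinarith
      have hy2 : x - 2 * π < 2 * π * (n + 1) := by push_cast at hx2 ⊢; nlinarith
      have hMx : (M : ℝ) * x = (M : ℝ) * (x - 2 * π) + 2 * π * M := by ring
      have hx' : x = (x - 2 * π) + 2 * π := by ring
      calc Complex.exp (-(θ₀ x : ℂ) * Complex.I) * Gfun d x
          = Complex.exp (-(θ₀ (x - 2 * π) : ℂ) * Complex.I) * Gfun d (x - 2 * π) := by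
            have h1 : θ₀ x = θ₀ (x - 2 * π) := by
              conv_lhs => rw [hx']
              exact hper _
            have h2 : Gfun d x = Gfun d (x - 2 * π) := by
              conv_lhs => rw [hx']
              exact Gfun_add d _
            rw [h1, h2]
        _ = Gfun d ((M : ℝ) * (x - 2 * π)) := ih _ hy hy2
        _ = Gfun d ((M : ℝ) * x) := by rw [hMx, Gfun_add_nat]

/-- Equation (23) / Proposition 3 of the paper: with the explicit
piecewise-linear low-pass phase `θ₀`, the dual scaling function is, on each
band `[2kπ, 2(k+1)π)`, a half-integer-shifted and sign-alternating copy of the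
primal one in the frequency domain. -/
theorem stmt_19 (M : ℕ) (hM : 2 ≤ M) (d : ℤ) (θ₀ : ℝ → ℝ)
    (hper : ∀ ω : ℝ, θ₀ (ω + 2 * π) = θ₀ ω)
    (hval : ∀ ω : ℝ, 0 ≤ ω → ω < 2 * π →
      θ₀ ω = ((d : ℝ) + 1 / 2) * ((M : ℝ) - 1) * ω - (⌊(M : ℝ) * ω / (2 * π)⌋ : ℝ) * π)
    (H₀ : ℝ → ℂ) (ω : ℝ) (hω : 0 ≤ ω) (ψ₀ : ℂ)
    (hψ₀ : Tendsto (fun n : ℕ => ∏ i ∈ Finset.range n,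
        ((Real.sqrt M : ℝ) : ℂ)⁻¹ * H₀ (ω / (M : ℝ) ^ (i + 1)))
      atTop (nhds ψ₀)) :
    ∃ ψ₀H : ℂ,
      Tendsto (fun n : ℕ => ∏ i ∈ Finset.range n,
          ((Real.sqrt M : ℝ) : ℂ)⁻¹ *
            (Complex.exp (-(θ₀ (ω / (M : ℝ) ^ (i + 1)) : ℂ) * Complex.I) *
              H₀ (ω / (M : ℝ) ^ (i + 1))))
        atTop (nhds ψ₀H) ∧
      ∀ k : ℕ, 2 * k * π ≤ ω → ω < 2 * ((k : ℝ) + 1) * π →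
        ψ₀H = (-1 : ℂ) ^ k *
          Complex.exp (-((((d : ℝ) + 1 / 2) * ω : ℝ) : ℂ) * Complex.I) * ψ₀ := by
  have hπ : (0:ℝ) < 2 * π := by positivity
  have hM1 : (1:ℝ) < (M:ℝ) := by exact_mod_cast lt_of_lt_of_le one_lt_two hM
  have hM0 : (0:ℝ) < (M:ℝ) := lt_trans one_pos hM1
  set E : ℕ → ℂ := fun i => Complex.exp (-(θ₀ (ω / (M : ℝ) ^ (i + 1)) : ℂ) * Complex.I)
    with hE
  have key := key_lemma M d θ₀ hper hval
  -- telescoping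
  have tele : ∀ n : ℕ, (∏ i ∈ Finset.range n, E i) * Gfun d (ω / (M : ℝ) ^ n)
      = Gfun d ω := by
    intro n
    induction n with
    | zero => simp
    | succ n ih =>
      rw [Finset.prod_range_succ]
      have hx : 0 ≤ ω / (M : ℝ) ^ (n + 1) := div_nonneg hω (pow_pos hM0 _).le
      have heq : (M : ℝ) * (ω / (M : ℝ) ^ (n + 1)) = ω / (M : ℝ) ^ n := by
        rw [pow_succ]
        field_simp
      calc (∏ i ∈ Finset.range n, E i) * E n * Gfun d (ω / (M : ℝ) ^ (n + 1))
          = (∏ i ∈ Finset.range n, E i) *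
            (E n * Gfun d (ω / (M : ℝ) ^ (n + 1))) := by ring
        _ = (∏ i ∈ Finset.range n, E i) * Gfun d (ω / (M : ℝ) ^ n) := by
            rw [hE]
            rw [key _ hx, heq]
        _ = Gfun d ω := ih
  have prodE : ∀ n : ℕ, (∏ i ∈ Finset.range n, E i)
      = Gfun d ω * (Gfun d (ω / (M : ℝ) ^ n))⁻¹ := fun n =>
    (eq_mul_inv_iff_mul_eq₀ (Gfun_ne_zero d _)).mpr (tele n)
  -- limit of ω / M^n
  have hlim0 : Tendsto (fun n : ℕ => ω / (M : ℝ) ^ n) atTop (nhds 0) := by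
    have h1 : Tendsto (fun n : ℕ => ((M : ℝ)⁻¹) ^ n) atTop (nhds 0) :=
      tendsto_pow_atTop_nhds_zero_of_lt_one (by positivity) (by
        rw [inv_lt_one_iff₀]; right; exact hM1)
    have := h1.const_mul ω
    simpa [div_eq_mul_inv, inv_pow] using this
  -- limit of Gfun
  have hGlim : Tendsto (fun n : ℕ => Gfun d (ω / (M : ℝ) ^ n)) atTop (nhds 1) := by
    have hcont : Tendsto (fun x : ℝ =>
        Complex.exp (-((((d : ℝ) + 1 / 2) * x : ℝ) : ℂ) * Complex.I)) (nhds 0) (nhds 1) := by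
      have hC : Continuous (fun x : ℝ =>
          Complex.exp (-((((d : ℝ) + 1 / 2) * x : ℝ) : ℂ) * Complex.I)) := by
        fun_prop
      have := hC.tendsto 0
      simpa using this
    have hev : ∀ᶠ n : ℕ in atTop, Complex.exp
        (-((((d : ℝ) + 1 / 2) * (ω / (M : ℝ) ^ n) : ℝ) : ℂ) * Complex.I)
        = Gfun d (ω / (M : ℝ) ^ n) := by
      filter_upwards [hlim0.eventually_lt_const hπ] with n hn
      have hx : 0 ≤ ω / (M : ℝ) ^ n := div_nonneg hω (pow_pos hM0 _).le
      have hfl0 : ⌊(ω / (M : ℝ) ^ n) / (2 * π)⌋ = 0 := by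
        rw [Int.floor_eq_zero_iff]
        constructor
        · positivity
        · rw [div_lt_one hπ]; exact hn
      unfold Gfun
      rw [hfl0, zpow_zero, one_mul]
    exact (hcont.comp hlim0).congr' hev
  -- rewrite the dual partial products
  have hrw : ∀ n : ℕ, (∏ i ∈ Finset.range n,
      ((Real.sqrt M : ℝ) : ℂ)⁻¹ *
        (Complex.exp (-(θ₀ (ω / (M : ℝ) ^ (i + 1)) : ℂ) * Complex.I) *
          H₀ (ω / (M : ℝ) ^ (i + 1))))
      = Gfun d ω * (Gfun d (ω / (M : ℝ) ^ n))⁻¹ *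
        (∏ i ∈ Finset.range n,
          ((Real.sqrt M : ℝ) : ℂ)⁻¹ * H₀ (ω / (M : ℝ) ^ (i + 1))) := by
    intro n
    rw [← prodE, ← Finset.prod_mul_distrib]
    exact Finset.prod_congr rfl fun i _ => by rw [hE]; ring
  refine ⟨Gfun d ω * ψ₀, ?_, ?_⟩
  · have hT : Tendsto (fun n : ℕ => Gfun d ω * (Gfun d (ω / (M : ℝ) ^ n))⁻¹ *
        (∏ i ∈ Finset.range n,
          ((Real.sqrt M : ℝ) : ℂ)⁻¹ * H₀ (ω / (M : ℝ) ^ (i + 1))))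
        atTop (nhds (Gfun d ω * (1:ℂ)⁻¹ * ψ₀)) :=
      (tendsto_const_nhds.mul (hGlim.inv₀ one_ne_zero)).mul hψ₀
    rw [inv_one, mul_one] at hT
    exact hT.congr fun n => (hrw n).symm
  · intro k hk1 hk2
    have hfl : ⌊ω / (2 * π)⌋ = (k : ℤ) := by
      rw [Int.floor_eq_iff]
      constructor
      · rw [le_div_iff₀ hπ]; push_cast; nlinarith
      · rw [div_lt_iff₀ hπ]; push_cast; nlinarith
    unfold Gfun
    rw [hfl, zpow_natCast]
end
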